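/- arXiv:1507.00880 — 11 statements merged into one kernel-verified Lean document; each statement's English description precedes it below -/
import Mathlib

section
/- Let ε₀ > 0 and let γ : [0, ε₀] → ℝⁿ be a real-analytic curve that is skew, i.e. there is no nonzero vector λ ∈ ℝⁿ and constant c ∈ ℝ with ⟨λ, γ(ε)⟩ + c = 0 for all ε ∈ [0, ε₀]. Then the set of ε ∈ [0, ε₀] for which the n+1 real numbers γ₁(ε), …, γₙ(ε), 1 are linearly independent over ℚ is dense in [0, ε₀]. -/
/-!
For a nonzero rational vector `(q, q₀)`, the function `ε ↦ ⟨q, γ ε⟩ + q₀` is analytic on the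
interval and, by skewness, not identically zero there; by the identity theorem its zero set in
the interval is closed with empty interior. There are countably many such vectors, so by the
Baire category theorem the union of these zero sets is meagre, and its complement is dense in
the interval.
-/

open Set Filter Topology

section ZeroSet

variable {𝕜 : Type*} [NontriviallyNormedField 𝕜] {E : Type*} [NormedAddCommGroup E]
  [NormedSpace 𝕜 E] {F : Type*} [NormedAddCommGroup F] [NormedSpace 𝕜 F] {s : Set E}

theorem AnalyticOnNhd.isNowhereDense_inter_preimage_zero {f : E → F}
    (hf : AnalyticOnNhd 𝕜 f s) (hs : IsPreconnected s) (hsc : IsClosed s)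
    (hne : ¬ EqOn f 0 s) : IsNowhereDense (s ∩ f ⁻¹' {0}) := by
  rw [(hf.continuousOn.preimage_isClosed_of_isClosed hsc isClosed_singleton).isNowhereDense_iff,
    eq_empty_iff_forall_notMem]
  intro y hy
  have hvanish : f =ᶠ[𝓝 y] 0 :=
    eventually_of_mem (mem_interior_iff_mem_nhds.1 hy) fun _ hx => hx.2
  exact hne (hf.eqOn_zero_of_preconnected_of_eventuallyEq_zero hs (interior_subset hy).1 hvanish)

theorem AnalyticOnNhd.closure_interior_subset_closure_setOf_forall_ne_zero [BaireSpace E]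
    {ι : Type*} [Countable ι] {f : ι → E → F} (hf : ∀ i, AnalyticOnNhd 𝕜 (f i) s)
    (hs : IsPreconnected s) (hsc : IsClosed s) (hne : ∀ i, ¬ EqOn (f i) 0 s) :
    closure (interior s) ⊆ closure {x ∈ s | ∀ i, f i x ≠ 0} := by
  have hmeagre : IsMeagre (⋃ i, s ∩ f i ⁻¹' {0}) :=
    isMeagre_iUnion fun i => ((hf i).isNowhereDense_inter_preimage_zero hs hsc (hne i)).isMeagre
  have hsub : interior s ∩ (⋃ i, s ∩ f i ⁻¹' {0})ᶜ ⊆ {x ∈ s | ∀ i, f i x ≠ 0} := by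
    rintro x ⟨hx, hgood⟩
    simp only [compl_iUnion, mem_iInter, mem_compl_iff, mem_inter_iff, mem_preimage,
      mem_singleton_iff, not_and] at hgood
    exact ⟨interior_subset hx, fun i => hgood i (interior_subset hx)⟩
  refine closure_minimal ?_ isClosed_closure
  exact ((dense_of_mem_residual hmeagre).open_subset_closure_inter isOpen_interior).trans
    (closure_mono hsub)

end ZeroSet

theorem eq_zero_of_forall_sum_mul_add_eq_zero {ι : Type*} [Fintype ι] {γ : ℝ → ι → ℝ}
    {s : Set ℝ}
    (hskew : ¬ ∃ (lam : ι → ℝ) (c : ℝ), lam ≠ 0 ∧ ∀ ε ∈ s, (∑ i, lam i * γ ε i) + c = 0)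
    (hs : s.Nonempty) {lam : ι → ℝ} {c : ℝ} (h : ∀ ε ∈ s, (∑ i, lam i * γ ε i) + c = 0) :
    lam = 0 ∧ c = 0 := by
  by_cases hlam : lam = 0
  · obtain ⟨ε, hε⟩ := hs
    simpa [hlam] using h ε hε
  · exact (hskew ⟨lam, c, hlam, h⟩).elim

/-- If `γ : [0, ε₀] → ℝⁿ` is a real-analytic skew curve, then the set of
`ε ∈ [0, ε₀]` such that `γ₁(ε), …, γₙ(ε), 1` are `ℚ`-linearly independent is dense in
`[0, ε₀]`. -/
theorem lissajous_stmt0 (n : ℕ) (ε₀ : ℝ) (hε₀ : 0 < ε₀) (γ : ℝ → Fin n → ℝ)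
    (hanal : ∀ i : Fin n, AnalyticOnNhd ℝ (fun ε => γ ε i) (Set.Icc 0 ε₀))
    (hskew : ¬ ∃ (lam : Fin n → ℝ) (c : ℝ), lam ≠ 0 ∧
      ∀ ε ∈ Set.Icc (0:ℝ) ε₀, (∑ i, lam i * γ ε i) + c = 0) :
    Set.Icc (0:ℝ) ε₀ ⊆ closure {ε | ε ∈ Set.Icc (0:ℝ) ε₀ ∧
      ∀ (q : Fin n → ℚ) (q0 : ℚ), (∑ i, (q i : ℝ) * γ ε i) + (q0 : ℝ) = 0 →
        (∀ i, q i = 0) ∧ q0 = 0} := by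
  let f : {p : (Fin n → ℚ) × ℚ // p ≠ 0} → ℝ → ℝ :=
    fun p ε => (∑ i, (p.1.1 i : ℝ) * γ ε i) + p.1.2
  have hf : ∀ p, AnalyticOnNhd ℝ (f p) (Icc 0 ε₀) := fun p =>
    (Finset.analyticOnNhd_fun_sum _ fun i _ => analyticOnNhd_const.mul (hanal i)).add
      analyticOnNhd_const
  have hne : ∀ p, ¬ EqOn (f p) 0 (Icc 0 ε₀) := by
    rintro ⟨⟨q, q0⟩, hp⟩ hzero
    obtain ⟨hq, hq0⟩ := eq_zero_of_forall_sum_mul_add_eq_zero hskew (nonempty_Icc.2 hε₀.le) hzero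
    refine hp (Prod.ext (funext fun i => ?_) ?_)
    · simpa using congrFun hq i
    · simpa using hq0
  have hdense := AnalyticOnNhd.closure_interior_subset_closure_setOf_forall_ne_zero hf
    isPreconnected_Icc isClosed_Icc hne
  rw [interior_Icc, closure_Ioo hε₀.ne] at hdense
  refine hdense.trans (closure_mono fun ε hε => ⟨hε.1, fun q q0 hq => ?_⟩)
  by_contra hp
  exact hε.2 ⟨(q, q0), fun h => hp (by simpa [Prod.ext_iff, funext_iff] using h)⟩ hq
end

section
/- Let t₁, …, tₙ be real numbers such that t₁, …, tₙ, 1 are linearly independent over ℚ. Then the set of real numbers φ such that t₁ + φ, …, tₙ + φ, 1 are linearly independent over ℚ is dense in ℝ. -/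
/-! For a fixed nonzero rational relation `(q, q₀)`, the expression `∑ qᵢ (tᵢ + φ) + q₀` is affine
in `φ` with slope `∑ qᵢ`; the independence of `t₁, …, tₙ, 1` says it is never the zero function,
so it vanishes for at most one `φ`. Hence the bad `φ` form a countable set, whose complement is
dense. -/

theorem dense_setOf_forall_affine_ne_zero {𝕜 ι : Type*} [NontriviallyNormedField 𝕜]
    [CompleteSpace 𝕜] [Countable ι] (a b : ι → 𝕜) (hab : ∀ i, a i = 0 → b i ≠ 0) :
    Dense {x : 𝕜 | ∀ i, a i * x + b i ≠ 0} := by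
  refine ((Set.countable_range fun i => -b i / a i).dense_compl 𝕜).mono ?_
  intro x hx
  by_contra hbad
  obtain ⟨i, hi⟩ : ∃ i, a i * x + b i = 0 := by simpa using hbad
  have ha : a i ≠ 0 := fun ha => hab i ha (by simpa [ha] using hi)
  exact hx ⟨i, by field_simp; linear_combination -hi⟩

theorem sum_mul_add_const {ι R : Type*} [CommSemiring R] (s : Finset ι) (q t : ι → R) (c : R) :
    ∑ i ∈ s, q i * (t i + c) = ∑ i ∈ s, q i * t i + (∑ i ∈ s, q i) * c := by
  simp only [mul_add, Finset.sum_add_distrib, Finset.sum_mul]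

/-- If `t₁, …, tₙ, 1` are `ℚ`-linearly independent, then the set of `φ` such that
`t₁ + φ, …, tₙ + φ, 1` are `ℚ`-linearly independent is dense in `ℝ`. -/
theorem lissajous_stmt1 (n : ℕ) (t : Fin n → ℝ)
    (hind : ∀ (q : Fin n → ℚ) (q0 : ℚ), (∑ i, (q i : ℝ) * t i) + (q0 : ℝ) = 0 →
      (∀ i, q i = 0) ∧ q0 = 0) :
    Dense {φ : ℝ | ∀ (q : Fin n → ℚ) (q0 : ℚ), (∑ i, (q i : ℝ) * (t i + φ)) + (q0 : ℝ) = 0 →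
      (∀ i, q i = 0) ∧ q0 = 0} := by
  let Relation := {p : (Fin n → ℚ) × ℚ // ¬((∀ i, p.1 i = 0) ∧ p.2 = 0)}
  let slope (p : Relation) : ℝ := ∑ i, (p.1.1 i : ℝ)
  let offset (p : Relation) : ℝ := ∑ i, (p.1.1 i : ℝ) * t i + p.1.2
  have hnonconst : ∀ p, slope p = 0 → offset p ≠ 0 := fun p _ h => p.2 (hind _ _ h)
  refine (dense_setOf_forall_affine_ne_zero slope offset hnonconst).mono ?_
  intro φ hφ q q0 hrel
  by_contra hne
  refine hφ ⟨(q, q0), hne⟩ ?_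
  rw [sum_mul_add_const] at hrel
  linear_combination hrel
end

section
/- Let ε₀ > 0 and let γ : [0, ε₀] → ℝⁿ be a real-analytic curve. Suppose there exist integers 1 ≤ k₁ < k₂ < … < kₙ such that the n × n matrix whose (i, j) entry is the k_j-th derivative of γ_i at 0 has nonzero determinant. Then the set of ε ∈ [0, ε₀] for which the real numbers 1, γ₁(ε), …, γₙ(ε) are linearly independent over ℚ is dense in [0, ε₀]. -/
/-!
A nontrivial rational relation `∑ qᵢ γᵢ + q₀ = 0` is an analytic function of `ε` on `[0, ε₀]`.
If it vanished identically it would vanish near `0`, so all its derivatives at `0` would vanish;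
the derivatives of orders `k₁, …, kₙ ≥ 1` do not see `q₀` and say `q ᵥ* M = 0` for the
invertible matrix `M`, forcing `q = 0` and then `q₀ = 0`. Hence each relation holds only on the
isolated, so countable, zero set of a nonzero analytic function, and the countably many
relations exclude a countable subset of `[0, ε₀]`, whose complement is dense.
-/

open Set Filter Topology Matrix

theorem AnalyticOnNhd.countable_setOf_eq_zero {𝕜 E : Type*} [NontriviallyNormedField 𝕜]
    [SecondCountableTopology 𝕜] [NormedAddCommGroup E] [NormedSpace 𝕜 E] {f : 𝕜 → E}
    {U : Set 𝕜} (hf : AnalyticOnNhd 𝕜 f U) (hU : IsPreconnected U) (hne : ¬ EqOn f 0 U) :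
    {x ∈ U | f x = 0}.Countable := by
  have hcod := (hf.eqOn_zero_or_eventually_ne_zero_of_preconnected hU).resolve_left hne
  have hdisc : IsDiscrete ({x | f x = 0} ∩ U) := isDiscrete_of_codiscreteWithin hcod
  rw [inter_comm] at hdisc
  exact (HereditarilyLindelofSpace.isLindelof _).countable_of_isDiscrete hdisc

theorem AnalyticAt.eventuallyEq_zero_of_eqOn_Icc {E : Type*} [NormedAddCommGroup E]
    [NormedSpace ℝ E] {g : ℝ → E} {a b : ℝ} (hab : a < b) (hg : AnalyticAt ℝ g a)
    (h : EqOn g 0 (Icc a b)) : g =ᶠ[𝓝 a] 0 := by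
  refine hg.frequently_zero_iff_eventually_zero.1 ?_
  have : ∀ᶠ z in 𝓝[>] a, g z = 0 := mem_of_superset (Icc_mem_nhdsGT hab) h
  exact this.frequently.filter_mono (nhdsGT_le_nhdsNE a)

theorem iteratedDeriv_fun_sum_apply {𝕜 F ι : Type*} [NontriviallyNormedField 𝕜]
    [NormedAddCommGroup F] [NormedSpace 𝕜 F] {f : ι → 𝕜 → F} {u : Finset ι} {m : ℕ} {x : 𝕜}
    (h : ∀ i ∈ u, ContDiffAt 𝕜 m (f i) x) :
    iteratedDeriv m (fun z => ∑ i ∈ u, f i z) x = ∑ i ∈ u, iteratedDeriv m (f i) x := by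
  simp only [iteratedDeriv_eq_iteratedFDeriv, iteratedFDeriv_fun_sum_apply h,
    _root_.sum_apply]

theorem eq_zero_of_sum_mul_add_eventuallyEq_zero {𝕜 ι : Type*} [NontriviallyNormedField 𝕜]
    [Fintype ι] [DecidableEq ι] {f : ι → 𝕜 → 𝕜} {x : 𝕜} {k : ι → ℕ} (hk : ∀ j, 1 ≤ k j)
    (hf : ∀ i j, ContDiffAt 𝕜 (k j) (f i) x)
    (hdet : (Matrix.of fun i j => iteratedDeriv (k j) (f i) x).det ≠ 0)
    {c : ι → 𝕜} {c₀ : 𝕜} (h : (fun z => ∑ i, c i * f i z + c₀) =ᶠ[𝓝 x] 0) :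
    c = 0 ∧ c₀ = 0 := by
  have hc : c = 0 := by
    by_contra hc
    refine hdet (exists_vecMul_eq_zero_iff.1 ⟨c, hc, funext fun j => ?_⟩)
    have hder := (h.iteratedDeriv (k j)).eq_of_nhds
    simp_rw [add_comm _ c₀] at hder
    rw [iteratedDeriv_const_add (hk j), iteratedDeriv_fun_sum_apply
      fun i _ => contDiffAt_const.mul (hf i j)] at hder
    simpa [vecMul, dotProduct] using hder
  refine ⟨hc, ?_⟩
  simpa [hc] using h.eq_of_nhds

theorem Icc_subset_closure_diff_of_countable {a b : ℝ} (hab : a < b) {s : Set ℝ}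
    (hs : s.Countable) : Icc a b ⊆ closure (Icc a b \ s) := by
  calc Icc a b = closure (Ioo a b) := (closure_Ioo hab.ne).symm
    _ ⊆ closure (Ioo a b ∩ sᶜ) := closure_minimal
      ((hs.dense_compl ℝ).open_subset_closure_inter isOpen_Ioo) isClosed_closure
    _ ⊆ closure (Icc a b \ s) := closure_mono (inter_subset_inter_left _ Ioo_subset_Icc_self)

theorem countable_setOf_sum_mul_add_eq_zero {ι : Type*} [Fintype ι] [DecidableEq ι] {ε₀ : ℝ}
    (hε₀ : 0 < ε₀) {γ : ℝ → ι → ℝ} (hγ : ∀ i, AnalyticOnNhd ℝ (fun ε => γ ε i) (Icc 0 ε₀))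
    {k : ι → ℕ} (hk : ∀ j, 1 ≤ k j)
    (hdet : (Matrix.of fun i j => iteratedDeriv (k j) (fun ε => γ ε i) 0).det ≠ 0)
    {c : ι → ℝ} {c₀ : ℝ} (hc : (c, c₀) ≠ 0) :
    {ε ∈ Icc 0 ε₀ | ∑ i, c i * γ ε i + c₀ = 0}.Countable := by
  have h0 : (0 : ℝ) ∈ Icc 0 ε₀ := left_mem_Icc.2 hε₀.le
  have hanal : AnalyticOnNhd ℝ (fun ε => ∑ i, c i * γ ε i + c₀) (Icc 0 ε₀) := fun x hx =>
    (Finset.analyticAt_fun_sum _ fun i _ => analyticAt_const.mul (hγ i x hx)).add analyticAt_const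
  refine hanal.countable_setOf_eq_zero isPreconnected_Icc fun hzero => hc ?_
  have hev := (hanal 0 h0).eventuallyEq_zero_of_eqOn_Icc hε₀ hzero
  obtain ⟨rfl, rfl⟩ := eq_zero_of_sum_mul_add_eventuallyEq_zero hk
    (fun i j => (hγ i 0 h0).contDiffAt) hdet hev
  rfl

theorem lissajous_stmt2_general (n : ℕ) (ε₀ : ℝ) (hε₀ : 0 < ε₀) (γ : ℝ → Fin n → ℝ)
    (hanal : ∀ i : Fin n, AnalyticOnNhd ℝ (fun ε => γ ε i) (Set.Icc 0 ε₀))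
    (k : Fin n → ℕ) (hk1 : ∀ j, 1 ≤ k j)
    (hdet : (Matrix.of fun i j : Fin n => iteratedDeriv (k j) (fun ε => γ ε i) 0).det ≠ 0) :
    Set.Icc (0:ℝ) ε₀ ⊆ closure {ε | ε ∈ Set.Icc (0:ℝ) ε₀ ∧
      ∀ (q : Fin n → ℚ) (q0 : ℚ), (∑ i, (q i : ℝ) * γ ε i) + (q0 : ℝ) = 0 →
        (∀ i, q i = 0) ∧ q0 = 0} := by
  set bad := ⋃ p : {p : (Fin n → ℚ) × ℚ // p ≠ 0},
    {ε ∈ Icc 0 ε₀ | ∑ i, (p.1.1 i : ℝ) * γ ε i + p.1.2 = 0}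
  have hbad : bad.Countable := countable_iUnion fun ⟨(q, q₀), hq⟩ =>
    countable_setOf_sum_mul_add_eq_zero hε₀ hanal hk1 hdet (c := fun i => (q i : ℝ))
      (c₀ := q₀) fun h => hq (by simpa [Prod.ext_iff, funext_iff] using h)
  refine (Icc_subset_closure_diff_of_countable hε₀ hbad).trans (closure_mono ?_)
  rintro ε ⟨hε, hgood⟩
  refine ⟨hε, fun q q₀ hrel => ?_⟩
  have hq : (q, q₀) = 0 := by_contra fun hq => hgood (mem_iUnion.2 ⟨⟨(q, q₀), hq⟩, hε, hrel⟩)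
  simpa [Prod.ext_iff, funext_iff] using hq

/-- If `γ : [0, ε₀] → ℝⁿ` is real-analytic and some Wronskian-type determinant of
iterated derivatives at `0` (with orders `1 ≤ k₁ < ⋯ < kₙ`) is nonzero, then the set of
`ε ∈ [0, ε₀]` such that `1, γ₁(ε), …, γₙ(ε)` are `ℚ`-linearly independent is dense in
`[0, ε₀]`. -/
theorem lissajous_stmt2 (n : ℕ) (ε₀ : ℝ) (hε₀ : 0 < ε₀) (γ : ℝ → Fin n → ℝ)
    (hanal : ∀ i : Fin n, AnalyticOnNhd ℝ (fun ε => γ ε i) (Set.Icc 0 ε₀))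
    (k : Fin n → ℕ) (hk1 : ∀ j, 1 ≤ k j) (hkmono : StrictMono k)
    (hdet : (Matrix.of fun i j : Fin n => iteratedDeriv (k j) (fun ε => γ ε i) 0).det ≠ 0) :
    Set.Icc (0:ℝ) ε₀ ⊆ closure {ε | ε ∈ Set.Icc (0:ℝ) ε₀ ∧
      ∀ (q : Fin n → ℚ) (q0 : ℚ), (∑ i, (q i : ℝ) * γ ε i) + (q0 : ℝ) = 0 →
        (∀ i, q i = 0) ∧ q0 = 0} :=
  lissajous_stmt2_general n ε₀ hε₀ γ hanal k hk1 hdet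
end

section
/- Let n₁, n₂ be coprime positive integers. Then the number of pairs of integers (k, l) with k ≥ 1, l ≥ 1 and n₂·k + n₁·l < 2·n₁·n₂ equals 2·n₁·n₂ − n₁ − n₂. -/
/-- For coprime positive integers `n₁, n₂`, the number of integer pairs `(k, l)`
with `k ≥ 1`, `l ≥ 1` and `n₂·k + n₁·l < 2·n₁·n₂` equals `2·n₁·n₂ − n₁ − n₂`. -/
theorem lissajous_stmt3 (n₁ n₂ : ℕ) (h₁ : 0 < n₁) (h₂ : 0 < n₂) (hcop : Nat.Coprime n₁ n₂) :
    Set.ncard {p : ℤ × ℤ | 1 ≤ p.1 ∧ 1 ≤ p.2 ∧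
        (n₂ : ℤ) * p.1 + (n₁ : ℤ) * p.2 < 2 * n₁ * n₂}
      = 2 * n₁ * n₂ - n₁ - n₂ := by
  classical
  have hN₁ : (0:ℤ) < n₁ := by exact_mod_cast h₁
  have hN₂ : (0:ℤ) < n₂ := by exact_mod_cast h₂
  set R : Finset (ℤ × ℤ) :=
    (Finset.Icc 1 (2*(n₁:ℤ)-1)) ×ˢ (Finset.Icc 1 (2*(n₂:ℤ)-1)) with hR
  set T : Finset (ℤ × ℤ) :=
    R.filter (fun p => (n₂:ℤ) * p.1 + (n₁:ℤ) * p.2 < 2 * n₁ * n₂) with hTdef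
  have hset : {p : ℤ × ℤ | 1 ≤ p.1 ∧ 1 ≤ p.2 ∧
      (n₂ : ℤ) * p.1 + (n₁ : ℤ) * p.2 < 2 * n₁ * n₂} = ↑T := by
    ext ⟨k, l⟩
    simp only [hTdef, hR, Finset.coe_filter, Set.mem_setOf_eq, Finset.mem_product,
      Finset.mem_Icc]
    constructor
    · rintro ⟨h1, h2, h3⟩
      refine ⟨⟨⟨h1, ?_⟩, h2, ?_⟩, h3⟩ <;> nlinarith
    · rintro ⟨⟨⟨h1, _⟩, h2, _⟩, h3⟩
      exact ⟨h1, h2, h3⟩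
  rw [hset, Set.ncard_coe_finset]
  set T' : Finset (ℤ × ℤ) :=
    R.filter (fun p => 2 * (n₁:ℤ) * n₂ < (n₂:ℤ) * p.1 + (n₁:ℤ) * p.2) with hT'def
  set E : Finset (ℤ × ℤ) :=
    R.filter (fun p => (n₂:ℤ) * p.1 + (n₁:ℤ) * p.2 = 2 * n₁ * n₂) with hEdef
  -- reflection bijection
  have hcard_eq : T.card = T'.card := by
    apply Finset.card_bij' (fun p _ => ((2*(n₁:ℤ) - p.1, 2*(n₂:ℤ) - p.2) : ℤ × ℤ))
      (fun p _ => ((2*(n₁:ℤ) - p.1, 2*(n₂:ℤ) - p.2) : ℤ × ℤ))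
    · rintro ⟨k, l⟩ hp
      simp only [hTdef, hT'def, hR, Finset.mem_filter, Finset.mem_product,
        Finset.mem_Icc] at hp ⊢
      obtain ⟨⟨⟨hk1, hk2⟩, hl1, hl2⟩, hlt⟩ := hp
      refine ⟨⟨⟨by linarith, by linarith⟩, by linarith, by linarith⟩, by linarith⟩
    · rintro ⟨k, l⟩ hp
      simp only [hTdef, hT'def, hR, Finset.mem_filter, Finset.mem_product,
        Finset.mem_Icc] at hp ⊢
      obtain ⟨⟨⟨hk1, hk2⟩, hl1, hl2⟩, hlt⟩ := hp
      refine ⟨⟨⟨by linarith, by linarith⟩, by linarith, by linarith⟩, by linarith⟩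
    · rintro ⟨k, l⟩ _; simp
    · rintro ⟨k, l⟩ _; simp
  -- the equality locus is a single point
  have hE : E = {(((n₁:ℤ)), ((n₂:ℤ)))} := by
    ext ⟨k, l⟩
    simp only [hEdef, hR, Finset.mem_filter, Finset.mem_product, Finset.mem_Icc,
      Finset.mem_singleton, Prod.mk.injEq]
    constructor
    · rintro ⟨⟨⟨hk1, hk2⟩, hl1, hl2⟩, heq⟩
      have hdvd : (n₁:ℤ) ∣ (n₂:ℤ) * k := ⟨2*(n₂:ℤ) - l, by linarith⟩
      have hcop' : IsCoprime (n₁:ℤ) (n₂:ℤ) := by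
        rw [Int.isCoprime_iff_gcd_eq_one]
        exact_mod_cast hcop
      have hk : (n₁:ℤ) ∣ k := hcop'.dvd_of_dvd_mul_left hdvd
      obtain ⟨m, rfl⟩ := hk
      have hm1 : 1 ≤ m := by nlinarith
      have hm2 : m ≤ 1 := by nlinarith
      have hm : m = 1 := le_antisymm hm2 hm1
      subst hm
      have h7 : (n₁:ℤ) * l = (n₁:ℤ) * n₂ := by linear_combination heq
      constructor
      · ring
      · exact mul_left_cancel₀ hN₁.ne' h7
    · rintro ⟨rfl, rfl⟩
      refine ⟨⟨⟨by linarith, by linarith⟩, by linarith, by linarith⟩, by ring⟩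
  have hEcard : E.card = 1 := by rw [hE]; simp
  -- split R
  have hsplit : T.card + (R.filter (fun p => ¬ ((n₂:ℤ) * p.1 + (n₁:ℤ) * p.2 < 2 * n₁ * n₂))).card
      = R.card := Finset.card_filter_add_card_filter_not _
  have hcompl : R.filter (fun p => ¬ ((n₂:ℤ) * p.1 + (n₁:ℤ) * p.2 < 2 * n₁ * n₂)) = E ∪ T' := by
    ext ⟨k, l⟩
    simp only [hEdef, hT'def, Finset.mem_filter, Finset.mem_union, not_lt]
    constructor
    · rintro ⟨hm, hle⟩
      rcases hle.lt_or_eq with h | h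
      · exact Or.inr ⟨hm, h⟩
      · exact Or.inl ⟨hm, h.symm⟩
    · rintro (⟨hm, h⟩ | ⟨hm, h⟩)
      · exact ⟨hm, le_of_eq h.symm⟩
      · exact ⟨hm, le_of_lt h⟩
  have hdisj : Disjoint E T' := by
    rw [Finset.disjoint_left]
    rintro ⟨k, l⟩ hpe hpt
    simp only [hEdef, hT'def, Finset.mem_filter] at hpe hpt
    linarith [hpe.2, hpt.2]
  have hcardR : R.card = (2*n₁-1) * (2*n₂-1) := by
    rw [hR, Finset.card_product, Int.card_Icc, Int.card_Icc]
    have e1 : ((2*(n₁:ℤ)-1) + 1 - 1).toNat = 2*n₁-1 := by omega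
    have e2 : ((2*(n₂:ℤ)-1) + 1 - 1).toNat = 2*n₂-1 := by omega
    rw [e1, e2]
  have hkey : 2 * T.card + 1 = (2*n₁-1) * (2*n₂-1) := by
    rw [hcompl, Finset.card_union_of_disjoint hdisj, hEcard, ← hcard_eq] at hsplit
    omega
  obtain ⟨a, rfl⟩ : ∃ a, n₁ = a + 1 := ⟨n₁ - 1, by omega⟩
  obtain ⟨b, rfl⟩ : ∃ b, n₂ = b + 1 := ⟨n₂ - 1, by omega⟩
  have e3 : (2*(a+1)-1) * (2*(b+1)-1) = 4*(a*b) + 2*a + 2*b + 1 := by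
    have ha : 2*(a+1)-1 = 2*a+1 := by omega
    have hb : 2*(b+1)-1 = 2*b+1 := by omega
    rw [ha, hb]; ring
  have e4 : 2*(a+1)*(b+1) = 2*(a*b) + 2*a + 2*b + 2 := by ring
  omega
end

section
/- Let n₁, n₂ ≥ 2 be coprime integers. There exists φ₀ > 0 such that for every irrational φ with 0 < φ < φ₀, the planar Lissajous curve L(t) = (cos(2π n₁ t), cos(2π n₂ (t + φ))), t ∈ [0,1), has exactly 2·n₁·n₂ − n₁ − n₂ double points; precisely, the set of unordered pairs {s, t} with s, t ∈ [0,1), s ≠ t and L(s) = L(t) is finite of cardinality 2·n₁·n₂ − n₁ − n₂. -/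
/-!
Since `cos (2πx) = cos (2πy)` iff `x - y ∈ ℤ` or `x + y ∈ ℤ`, a double point `s > t` of the curve
satisfies one of these conditions for `n₁ s, n₁ t` and one for `n₂ (s + φ), n₂ (t + φ)`. Both
differences integral would force `s - t ∈ ℤ` by coprimality, both sums integral would make `φ`
rational. What remains are the two families `n₁ (s - t) = k, n₂ (s + t + 2φ) = m` and
`n₂ (s - t) = k, n₁ (s + t) = m`, and once `2φ n₁ n₂ < 1` the admissible `(k, m)` are the lattice
points strictly inside the triangle with vertices `(0, 0), (0, 2b), (a, b)`, for `(a, b) = (n₁, n₂)`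
resp. `(n₂, n₁)`. Column `k` of that triangle holds `2b - 2⌊kb/a⌋ - 1` points, and
`⌊kb/a⌋ + ⌊(a - k)b/a⌋ = b - 1`, so columns `k` and `a - k` together hold `2b` points and the
triangle holds `(a - 1) b`.
-/

open Real

theorem cos_two_pi_mul_eq_cos_two_pi_mul_iff (n x y : ℝ) :
    cos (2 * π * n * x) = cos (2 * π * n * y) ↔
      (∃ k : ℤ, n * (x - y) = k) ∨ ∃ k : ℤ, n * (x + y) = k := by
  have h2π : 2 * π ≠ 0 := by positivity
  rw [Real.cos_eq_cos_iff]
  constructor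
  · rintro ⟨k, h | h⟩
    · exact Or.inl ⟨-k, mul_left_cancel₀ h2π (by push_cast; linear_combination -h)⟩
    · exact Or.inr ⟨k, mul_left_cancel₀ h2π (by linear_combination h)⟩
  · rintro (⟨k, h⟩ | ⟨k, h⟩)
    · exact ⟨-k, Or.inl (by push_cast; linear_combination (-2 * π) * h)⟩
    · exact ⟨k, Or.inr (by linear_combination 2 * π * h)⟩

theorem eq_zero_of_coprime_of_mul_eq_intCast {a b : ℕ} (hcop : a.Coprime b) {x : ℝ}
    (hx : |x| < 1) {k l : ℤ} (hk : a * x = k) (hl : b * x = l) : x = 0 := by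
  obtain ⟨u, v, huv⟩ := Nat.isCoprime_iff_coprime.2 hcop
  have huv' : (u : ℝ) * a + v * b = 1 := by exact_mod_cast huv
  have hx_int : x = ((u * k + v * l : ℤ) : ℝ) := by
    push_cast
    rw [← hk, ← hl]
    linear_combination (-x) * huv'
  rw [hx_int] at hx ⊢
  exact_mod_cast Int.abs_lt_one_iff.1 (by exact_mod_cast hx)

theorem Irrational.natCast_mul_add_ne_intCast {φ : ℝ} (hφ : Irrational φ) {a b : ℕ}
    (ha : a ≠ 0) (hb : b ≠ 0) {x : ℝ} {k : ℤ} (hk : a * x = k) (m : ℤ) :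
    b * (x + φ) ≠ m := by
  intro hm
  refine (hφ.natCast_mul (Nat.mul_ne_zero ha hb)).ne_int (a * m - b * k) ?_
  push_cast
  linear_combination a * hm - b * hk

theorem Sym2.injOn_mk_setOf_snd_lt_fst {α : Type*} [LinearOrder α] :
    Set.InjOn (fun p : α × α => s(p.1, p.2)) {p | p.2 < p.1} := by
  intro p hp q hq h
  rcases Sym2.mk_eq_mk_iff.1 h with h | rfl
  · exact h
  · exact (lt_asymm hp hq).elim

theorem Sym2.setOf_mk_eq_image {α β : Type*} [LinearOrder α] (f : α → β) (I : Set α) :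
    {z : Sym2 α | ∃ s t, z = s(s, t) ∧ s ∈ I ∧ t ∈ I ∧ s ≠ t ∧ f s = f t} =
      (fun p : α × α => s(p.1, p.2)) '' {p | p.1 ∈ I ∧ p.2 ∈ I ∧ p.2 < p.1 ∧ f p.1 = f p.2} := by
  ext z
  constructor
  · rintro ⟨s, t, rfl, hs, ht, hne, hf⟩
    rcases hne.lt_or_gt with h | h
    · exact ⟨(t, s), ⟨ht, hs, h, hf.symm⟩, Sym2.eq_swap⟩
    · exact ⟨(s, t), ⟨hs, ht, h, hf⟩, rfl⟩
  · rintro ⟨p, ⟨hs, ht, hlt, hf⟩, rfl⟩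
    exact ⟨p.1, p.2, rfl, hs, ht, hlt.ne', hf⟩

section latticeTriangle

open Finset

def latticeTriangle (a b : ℕ) : Finset (ℕ × ℕ) :=
  (Ico 1 a ×ˢ range (2 * b)).filter
    fun p => p.1 * b < p.2 * a ∧ p.2 * a + p.1 * b < 2 * a * b

theorem not_dvd_mul_of_coprime {a b k : ℕ} (hcop : a.Coprime b) (hk0 : 0 < k) (hka : k < a) :
    ¬ a ∣ k * b := fun h => absurd (Nat.le_of_dvd hk0 (hcop.dvd_mul_right.1 h)) (by omega)

theorem mul_div_add_sub_mul_div_of_coprime {a b k : ℕ} (hcop : a.Coprime b) (hk0 : 0 < k)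
    (hka : k < a) : k * b / a + (a - k) * b / a = b - 1 := by
  have hr₁ : 0 < k * b % a :=
    Nat.pos_of_ne_zero fun h => not_dvd_mul_of_coprime hcop hk0 hka (Nat.dvd_of_mod_eq_zero h)
  have hr₂ : 0 < (a - k) * b % a :=
    Nat.pos_of_ne_zero fun h =>
      not_dvd_mul_of_coprime hcop (by omega) (by omega) (Nat.dvd_of_mod_eq_zero h)
  have hr₁' := Nat.mod_lt (k * b) (by omega : 0 < a)
  have hr₂' := Nat.mod_lt ((a - k) * b) (by omega : 0 < a)
  have h₁ := Nat.div_add_mod (k * b) a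
  have h₂ := Nat.div_add_mod ((a - k) * b) a
  have hsum : k * b + (a - k) * b = a * b := by rw [← add_mul, Nat.add_sub_cancel' hka.le]
  generalize k * b / a = q₁, (a - k) * b / a = q₂, k * b % a = r₁, (a - k) * b % a = r₂ at *
  have hlt : q₁ + q₂ < b := by nlinarith
  have hgt : b < q₁ + q₂ + 2 := by nlinarith
  omega

theorem card_filter_range_latticeTriangle_fiber {a b k : ℕ} (ha : 0 < a) :
    ((range (2 * b)).filter fun m => k * b < m * a ∧ m * a + k * b < 2 * a * b).card =
      2 * b - 2 * (k * b / a) - 1 := by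
  have hfiber : ((range (2 * b)).filter fun m => k * b < m * a ∧ m * a + k * b < 2 * a * b) =
      Ioo (k * b / a) (2 * b - k * b / a) := by
    ext m
    have h₂ : m * a + k * b < 2 * a * b ↔ k * b / a + m < 2 * b := by
      rw [← Nat.add_mul_div_right _ _ ha, Nat.div_lt_iff_lt_mul ha]
      constructor <;> intro h <;> linarith
    rw [mem_filter, mem_range, mem_Ioo, h₂, ← Nat.div_lt_iff_lt_mul ha]
    generalize k * b / a = q
    omega
  rw [hfiber, Nat.card_Ioo]
  generalize k * b / a = q
  omega

theorem card_latticeTriangle {a b : ℕ} (hcop : a.Coprime b) :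
    (latticeTriangle a b).card = (a - 1) * b := by
  set f : ℕ → ℕ := fun k => 2 * b - 2 * (k * b / a) - 1
  have hcard : (latticeTriangle a b).card = ∑ k ∈ Ico 1 a, f k := by
    rw [latticeTriangle, card_filter, sum_product]
    refine sum_congr rfl fun k hk => ?_
    rw [← card_filter, card_filter_range_latticeTriangle_fiber (by simp at hk; omega)]
  have hpair : ∀ k ∈ Ico 1 a, f k + f (a - k) = 2 * b := by
    intro k hk
    simp only [mem_Ico] at hk
    have h := mul_div_add_sub_mul_div_of_coprime hcop (k := k) (by omega) (by omega)
    simp only [f]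
    generalize k * b / a = q₁, (a - k) * b / a = q₂ at *
    omega
  have hreflect : ∑ k ∈ Ico 1 a, f (a - k) = ∑ k ∈ Ico 1 a, f k := by
    rw [sum_Ico_reflect f 1 (Nat.le_succ a), Nat.add_sub_cancel_left, Nat.add_sub_cancel]
  have htwice : 2 * ∑ k ∈ Ico 1 a, f k = 2 * ((a - 1) * b) := by
    rw [two_mul]
    nth_rw 2 [← hreflect]
    rw [← sum_add_distrib, sum_congr rfl hpair, sum_const, Nat.card_Ico, smul_eq_mul]
    ring
  rw [hcard]
  exact Nat.eq_of_mul_eq_mul_left two_pos htwice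

end latticeTriangle

noncomputable def chordPoint (a b : ℕ) (c : ℝ) (p : ℕ × ℕ) : ℝ × ℝ :=
  ((p.2 / b - c + p.1 / a) / 2, (p.2 / b - c - p.1 / a) / 2)

section chordPoint

variable {a b : ℕ} {c : ℝ}

theorem chordPoint_eq_iff (ha : 0 < a) (hb : 0 < b) {p : ℕ × ℕ} {s t : ℝ} :
    chordPoint a b c p = (s, t) ↔ a * (s - t) = p.1 ∧ b * (s + t + c) = p.2 := by
  have ha' : (a : ℝ) ≠ 0 := by positivity
  have hb' : (b : ℝ) ≠ 0 := by positivity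
  rw [chordPoint, Prod.mk.injEq]
  constructor
  · rintro ⟨rfl, rfl⟩
    constructor <;> field_simp <;> ring
  · rintro ⟨hk, hm⟩
    rw [← hk, ← hm]
    constructor <;> field_simp <;> ring

theorem chordPoint_injective (ha : 0 < a) (hb : 0 < b) :
    Function.Injective (chordPoint a b c) := by
  intro p q h
  obtain ⟨hp₁, hp₂⟩ := (chordPoint_eq_iff ha hb).1 h
  obtain ⟨hq₁, hq₂⟩ := (chordPoint_eq_iff (c := c) (p := q) ha hb).1 rfl
  exact Prod.ext (by exact_mod_cast hp₁.symm.trans hq₁) (by exact_mod_cast hp₂.symm.trans hq₂)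

theorem mk_mem_latticeTriangle_iff (hcop : a.Coprime b) (ha : 0 < a) (hb : 0 < b)
    (hc₀ : 0 ≤ c) (hc : c * a * b < 1) {s t : ℝ} {k m : ℕ}
    (hk : a * (s - t) = k) (hm : b * (s + t + c) = m) :
    (k, m) ∈ latticeTriangle a b ↔ 0 ≤ t ∧ t < s ∧ s < 1 := by
  have hab : (0 : ℝ) < a * b := by positivity
  have hdiff : (m * a - k * b : ℝ) = a * b * (2 * t + c) := by rw [← hk, ← hm]; ring
  have hsum : (m * a + k * b : ℝ) = a * b * (2 * s + c) := by rw [← hk, ← hm]; ring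
  simp only [latticeTriangle, Finset.mem_filter, Finset.mem_product, Finset.mem_Ico,
    Finset.mem_range]
  constructor
  · rintro ⟨⟨⟨hk₁, -⟩, -⟩, hlt, hlt'⟩
    have hk₁ : (1 : ℝ) ≤ k := by exact_mod_cast hk₁
    have hlt : (k * b + 1 : ℝ) ≤ m * a := by exact_mod_cast hlt
    have hlt' : (m * a + k * b + 1 : ℝ) ≤ 2 * a * b := by exact_mod_cast hlt'
    exact ⟨by nlinarith, by nlinarith, by nlinarith⟩
  · rintro ⟨ht, hts, hs⟩
    have hk₀ : 0 < k := by exact_mod_cast (show (0 : ℝ) < k by rw [← hk]; nlinarith)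
    have hka : k < a := by exact_mod_cast (show (k : ℝ) < a by rw [← hk]; nlinarith)
    have hndvd := not_dvd_mul_of_coprime hcop hk₀ hka
    have hle : k * b ≤ m * a := by exact_mod_cast (show (k * b : ℝ) ≤ m * a by nlinarith)
    have hle' : m * a + k * b ≤ 2 * a * b := by
      have : (m * a + k * b : ℝ) < 2 * a * b + 1 := by nlinarith
      exact Nat.lt_add_one_iff.1 (by exact_mod_cast this)
    have hne : k * b ≠ m * a := fun h => hndvd ⟨m, by rw [h, mul_comm]⟩
    have hne' : m * a + k * b ≠ 2 * a * b := fun h =>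
      hndvd ((Nat.dvd_add_right (dvd_mul_left a m)).1 (by rw [h]; exact ⟨2 * b, by ring⟩))
    refine ⟨⟨⟨hk₀, hka⟩, ?_⟩, lt_of_le_of_ne hle hne, lt_of_le_of_ne hle' hne'⟩
    nlinarith

theorem mem_image_chordPoint_iff (hcop : a.Coprime b) (ha : 0 < a) (hb : 0 < b)
    (hc₀ : 0 ≤ c) (hc : c * a * b < 1) {s t : ℝ} :
    (s, t) ∈ chordPoint a b c '' latticeTriangle a b ↔
      (0 ≤ t ∧ t < s ∧ s < 1) ∧ (∃ k : ℤ, a * (s - t) = k) ∧ ∃ m : ℤ, b * (s + t + c) = m := by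
  constructor
  · rintro ⟨⟨k, m⟩, hkm, hst⟩
    obtain ⟨hk, hm⟩ := (chordPoint_eq_iff ha hb).1 hst
    exact ⟨(mk_mem_latticeTriangle_iff hcop ha hb hc₀ hc hk hm).1 hkm,
      ⟨k, by exact_mod_cast hk⟩, ⟨m, by exact_mod_cast hm⟩⟩
  · rintro ⟨hst, ⟨k, hk⟩, ⟨m, hm⟩⟩
    lift k to ℕ using by
      exact_mod_cast (show (0 : ℝ) ≤ k from hk ▸ mul_nonneg (Nat.cast_nonneg a) (by linarith))
    lift m to ℕ using by
      exact_mod_cast (show (0 : ℝ) ≤ m from hm ▸ mul_nonneg (Nat.cast_nonneg b) (by linarith))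
    exact ⟨(k, m), (mk_mem_latticeTriangle_iff hcop ha hb hc₀ hc hk hm).2 hst,
      (chordPoint_eq_iff ha hb).2 ⟨hk, hm⟩⟩

end chordPoint

noncomputable def lissajous (n₁ n₂ : ℕ) (φ t : ℝ) : ℝ × ℝ :=
  (cos (2 * π * n₁ * t), cos (2 * π * n₂ * (t + φ)))

theorem lissajous_eq_iff {n₁ n₂ : ℕ} (hcop : n₁.Coprime n₂) (h₁ : 0 < n₁) (h₂ : 0 < n₂)
    {φ : ℝ} (hφ : Irrational φ) {s t : ℝ} (hst : |s - t| < 1) (hne : s ≠ t) :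
    lissajous n₁ n₂ φ s = lissajous n₁ n₂ φ t ↔
      ((∃ k : ℤ, n₁ * (s - t) = k) ∧ ∃ m : ℤ, n₂ * (s + t + 2 * φ) = m) ∨
        ((∃ k : ℤ, n₂ * (s - t) = k) ∧ ∃ m : ℤ, n₁ * (s + t) = m) := by
  have hshift : (s + φ) + (t + φ) = s + t + 2 * φ := by ring
  rw [lissajous, lissajous, Prod.mk.injEq, cos_two_pi_mul_eq_cos_two_pi_mul_iff,
    cos_two_pi_mul_eq_cos_two_pi_mul_iff, add_sub_add_right_eq_sub, hshift]
  have hdiff : ¬ ((∃ k : ℤ, n₁ * (s - t) = k) ∧ ∃ l : ℤ, n₂ * (s - t) = l) :=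
    fun ⟨⟨k, hk⟩, ⟨l, hl⟩⟩ =>
      hne (sub_eq_zero.1 (eq_zero_of_coprime_of_mul_eq_intCast hcop hst hk hl))
  have hsum : ¬ ((∃ k : ℤ, n₁ * (s + t) = k) ∧ ∃ m : ℤ, n₂ * (s + t + 2 * φ) = m) :=
    fun ⟨⟨k, hk⟩, ⟨m, hm⟩⟩ =>
      (hφ.natCast_mul two_ne_zero).natCast_mul_add_ne_intCast h₁.ne' h₂.ne' hk m
        (by rw [← hm]; push_cast; ring)
  tauto

theorem lissajous_doublePoints_eq {n₁ n₂ : ℕ} (hcop : n₁.Coprime n₂) (h₁ : 0 < n₁) (h₂ : 0 < n₂)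
    {φ : ℝ} (hφ : Irrational φ) (hφ₀ : 0 < φ) (hφ₁ : 2 * φ * n₁ * n₂ < 1) :
    {p : ℝ × ℝ | p.1 ∈ Set.Ico 0 1 ∧ p.2 ∈ Set.Ico 0 1 ∧ p.2 < p.1 ∧
        lissajous n₁ n₂ φ p.1 = lissajous n₁ n₂ φ p.2} =
      chordPoint n₁ n₂ (2 * φ) '' latticeTriangle n₁ n₂ ∪
        chordPoint n₂ n₁ 0 '' latticeTriangle n₂ n₁ := by
  ext ⟨s, t⟩
  rw [Set.mem_union, mem_image_chordPoint_iff hcop h₁ h₂ (by positivity) hφ₁,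
    mem_image_chordPoint_iff hcop.symm h₂ h₁ le_rfl (by simp)]
  simp only [Set.mem_ofPred_eq, Set.mem_Ico, add_zero]
  constructor
  · rintro ⟨⟨hs₀, hs₁⟩, ⟨ht₀, ht₁⟩, hts, hL⟩
    rw [lissajous_eq_iff hcop h₁ h₂ hφ (abs_lt.2 ⟨by linarith, by linarith⟩) hts.ne'] at hL
    rcases hL with hL | hL
    exacts [Or.inl ⟨⟨ht₀, hts, hs₁⟩, hL⟩, Or.inr ⟨⟨ht₀, hts, hs₁⟩, hL⟩]
  · rintro (⟨⟨ht₀, hts, hs₁⟩, hL⟩ | ⟨⟨ht₀, hts, hs₁⟩, hL⟩) <;>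
    · refine ⟨⟨by linarith, hs₁⟩, ⟨ht₀, by linarith⟩, hts, ?_⟩
      rw [lissajous_eq_iff hcop h₁ h₂ hφ (abs_lt.2 ⟨by linarith, by linarith⟩) hts.ne']
      tauto

theorem disjoint_image_chordPoint {n₁ n₂ : ℕ} (hcop : n₁.Coprime n₂) (h₁ : 0 < n₁) (h₂ : 0 < n₂)
    {φ : ℝ} (hφ₀ : 0 < φ) (hφ₁ : 2 * φ * n₁ * n₂ < 1) :
    Disjoint (chordPoint n₁ n₂ (2 * φ) '' latticeTriangle n₁ n₂)
      (chordPoint n₂ n₁ 0 '' latticeTriangle n₂ n₁) := by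
  rw [Set.disjoint_left]
  rintro ⟨s, t⟩ h h'
  rw [mem_image_chordPoint_iff hcop h₁ h₂ (by positivity) hφ₁] at h
  rw [mem_image_chordPoint_iff hcop.symm h₂ h₁ le_rfl (by simp)] at h'
  obtain ⟨⟨ht₀, hts, hs₁⟩, ⟨k, hk⟩, -⟩ := h
  obtain ⟨-, ⟨l, hl⟩, -⟩ := h'
  exact hts.ne' (sub_eq_zero.1 (eq_zero_of_coprime_of_mul_eq_intCast hcop
    (abs_lt.2 ⟨by linarith, by linarith⟩) hk hl))

open Real in
/-- For coprime integers `n₁, n₂ ≥ 2` there is `φ₀ > 0` such that for every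
irrational `0 < φ < φ₀`, the planar Lissajous curve `L(t) = (cos(2πn₁t), cos(2πn₂(t+φ)))`
on `[0,1)` has exactly `2n₁n₂ − n₁ − n₂` double points (unordered pairs `{s,t}`, `s ≠ t`,
with `L s = L t`). -/
theorem lissajous_stmt4 (n₁ n₂ : ℕ) (h₁ : 2 ≤ n₁) (h₂ : 2 ≤ n₂) (hcop : Nat.Coprime n₁ n₂) :
    ∃ φ₀ > (0:ℝ), ∀ φ : ℝ, Irrational φ → 0 < φ → φ < φ₀ →
      let L : ℝ → ℝ × ℝ := fun t =>
        (Real.cos (2 * π * n₁ * t), Real.cos (2 * π * n₂ * (t + φ)))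
      let S : Set (Sym2 ℝ) := {z | ∃ s t : ℝ, z = Sym2.mk s t ∧
        s ∈ Set.Ico (0:ℝ) 1 ∧ t ∈ Set.Ico (0:ℝ) 1 ∧ s ≠ t ∧ L s = L t}
      S.Finite ∧ S.ncard = 2 * n₁ * n₂ - n₁ - n₂ := by
  have ha : 0 < n₁ := by omega
  have hb : 0 < n₂ := by omega
  refine ⟨1 / (2 * n₁ * n₂), by positivity, fun φ hφ hφ₀ hφ₁ => ?_⟩
  intro L S
  have hφ₁' : 2 * φ * n₁ * n₂ < 1 := by
    rw [lt_div_iff₀ (by positivity)] at hφ₁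
    linarith
  set D := {p : ℝ × ℝ | p.1 ∈ Set.Ico 0 1 ∧ p.2 ∈ Set.Ico 0 1 ∧ p.2 < p.1 ∧
    lissajous n₁ n₂ φ p.1 = lissajous n₁ n₂ φ p.2}
  have hS : S = (fun p : ℝ × ℝ => s(p.1, p.2)) '' D := Sym2.setOf_mk_eq_image _ _
  have hinj : D.InjOn (fun p : ℝ × ℝ => s(p.1, p.2)) :=
    Sym2.injOn_mk_setOf_snd_lt_fst.mono fun p hp => hp.2.2.1
  have hD : D = _ := lissajous_doublePoints_eq hcop ha hb hφ hφ₀ hφ₁'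
  have hfin₁ := (latticeTriangle n₁ n₂).finite_toSet.image (chordPoint n₁ n₂ (2 * φ))
  have hfin₂ := (latticeTriangle n₂ n₁).finite_toSet.image (chordPoint n₂ n₁ 0)
  refine ⟨hS ▸ hD ▸ (hfin₁.union hfin₂).image _, ?_⟩
  rw [hS, hinj.ncard_image, hD,
    Set.ncard_union_eq (disjoint_image_chordPoint hcop ha hb hφ₀ hφ₁') hfin₁ hfin₂,
    Set.ncard_image_of_injective _ (chordPoint_injective ha hb),
    Set.ncard_image_of_injective _ (chordPoint_injective hb ha),
    Set.ncard_coe_finset, Set.ncard_coe_finset,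
    card_latticeTriangle hcop, card_latticeTriangle hcop.symm, Nat.sub_sub]
  have hle : n₁ + n₂ ≤ 2 * n₁ * n₂ := by nlinarith
  zify [hle, Nat.one_le_of_lt ha, Nat.one_le_of_lt hb]
  ring
end

section
/- Let p ≥ 1 and let α₁, …, α_p and β₁, …, β_p be real numbers. Let M be the 2p × 2p real matrix whose rows come in pairs indexed by i = 1, …, p: the first row of the i-th pair has entries α_i⁰, α_i², …, α_i^{2p−2} followed by β_i·α_i⁰, β_i·α_i², …, β_i·α_i^{2p−2}, and the second row of the i-th pair has entries α_i⁰, α_i², …, α_i^{2p−2} followed by −β_i·α_i⁰, −β_i·α_i², …, −β_i·α_i^{2p−2}. Then |det M| = 2^p · |β₁ ⋯ β_p| · ( ∏_{1 ≤ i < j ≤ p} (α_i² − α_j²) )². -/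
/-- The `2p × 2p` determinant built from `p` pairs of Vandermonde-type rows in the
squares `αᵢ²`, with the second half of each row multiplied by `±βᵢ`, satisfies
`|det M| = 2^p · |β₁⋯β_p| · (∏_{i<j} (αᵢ² − αⱼ²))²`.  Rows are indexed by `(i, r)` (`r = 0` for
the first row of the `i`-th pair, `r = 1` for the second) and columns by `(j, c)` (`c = 0` for
the first `p` columns, `c = 1` for the last `p`). -/
theorem lissajous_stmt7 (p : ℕ) (hp : 1 ≤ p) (α β : Fin p → ℝ)
    (M : Matrix (Fin p × Fin 2) (Fin p × Fin 2) ℝ)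
    (hM : ∀ (i : Fin p) (r : Fin 2) (j : Fin p) (c : Fin 2),
      M (i, r) (j, c) =
        if c = 0 then (α i) ^ (2 * (j : ℕ))
        else (if r = 0 then β i else -β i) * (α i) ^ (2 * (j : ℕ))) :
    |M.det| = 2 ^ p * |∏ i, β i| *
      (∏ i : Fin p, ∏ j ∈ Finset.Ioi i, ((α i) ^ 2 - (α j) ^ 2)) ^ 2 := by
  set v : Fin p → ℝ := fun i => α i ^ 2 with hv
  set A : Matrix (Fin p × Fin 2) (Fin p × Fin 2) ℝ :=
    fun x y => if x.1 = y.1 then (if y.2 = 0 then 1 else if x.2 = 0 then β x.1 else -β x.1)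
      else 0 with hA
  set B : Matrix (Fin p × Fin 2) (Fin p × Fin 2) ℝ :=
    Matrix.blockDiagonal (fun _ : Fin 2 => Matrix.vandermonde v) with hB
  have hMAB : M = A * B := by
    ext ⟨i, r⟩ ⟨j, c⟩
    rw [hM, Matrix.mul_apply, Fintype.sum_prod_type]
    rw [Finset.sum_eq_single i]
    · have hpow : ∀ (j : Fin p), (α i ^ (j : ℕ)) ^ 2 = (α i ^ 2) ^ (j : ℕ) := fun j => by
        rw [← pow_mul, ← pow_mul, mul_comm]
      fin_cases c <;> fin_cases r <;>
        simp [hA, hB, Matrix.blockDiagonal_apply, Matrix.vandermonde, hv, pow_mul, hpow]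
    · intro k _ hk
      simp [hA, hB, (Ne.symm hk)]
    · simp
  have hAdet : A.det = ∏ i : Fin p, (-(2 * β i)) := by
    have hA2 : A = (Matrix.blockDiagonal (fun i : Fin p => !![1, β i; 1, -β i])).submatrix
        (Equiv.prodComm (Fin p) (Fin 2)) (Equiv.prodComm (Fin p) (Fin 2)) := by
      ext ⟨i, r⟩ ⟨k, s⟩
      simp only [hA, Matrix.submatrix_apply, Equiv.prodComm_apply, Prod.swap_prod_mk,
        Matrix.blockDiagonal_apply]
      fin_cases r <;> fin_cases s <;> by_cases h : i = k <;> simp [h]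
    rw [hA2, Matrix.det_submatrix_equiv_self, Matrix.det_blockDiagonal]
    congr 1; ext i
    simp [Matrix.det_fin_two_of]; ring
  have hBdet : B.det = (Matrix.vandermonde v).det ^ 2 := by
    rw [hB, Matrix.det_blockDiagonal, Finset.prod_const, Finset.card_univ, Fintype.card_fin]
  have hsq : (Matrix.vandermonde v).det ^ 2 =
      (∏ i : Fin p, ∏ j ∈ Finset.Ioi i, (v i - v j)) ^ 2 := by
    rw [Matrix.det_vandermonde, ← Finset.prod_pow, ← Finset.prod_pow]
    refine Finset.prod_congr rfl fun i _ => ?_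
    rw [← Finset.prod_pow, ← Finset.prod_pow]
    refine Finset.prod_congr rfl fun j _ => ?_
    ring
  rw [hMAB, Matrix.det_mul, hAdet, hBdet, hsq, abs_mul,
    abs_of_nonneg (sq_nonneg (∏ i : Fin p, ∏ j ∈ Finset.Ioi i, (v i - v j))), Finset.abs_prod]
  congr 1
  rw [Finset.abs_prod]
  simp only [abs_neg, abs_mul, Nat.abs_ofNat]
  rw [Finset.prod_mul_distrib, Finset.prod_const, Finset.card_univ, Fintype.card_fin,
    ← Finset.abs_prod]
end

section
/- Let n be an odd prime and let k, k' be integers with 1 ≤ k ≤ (n−1)/2 and 1 ≤ k' ≤ (n−1)/2. If the ratio cos(πk/n) / cos(πk'/n) is a rational number, then k = k'. -/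
/-!
Squaring `cos (π k / n) = q * cos (π k' / n)` and writing `ζ = exp (2π i / n)` turns it into the
relation `ζ ^ k' * (ζ ^ k + 1) ^ 2 = q ^ 2 * ζ ^ k * (ζ ^ k' + 1) ^ 2` over `ℚ`. As the cyclotomic
polynomial `Φ_n` is irreducible over `ℚ`, the relation holds for every primitive `n`-th root `η`.
Taking norms and multiplying over all `η`, both sides carry the same nonzero product
`∏ ‖η + 1‖ ^ 2` (`η ↦ η ^ k` permutes the primitive roots, and `η ≠ -1` as `n` is odd), so
`q ^ (2 φ(n)) = 1`. Hence the two cosines, both positive, are equal, and `cos` is injective on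
`[0, π]`.
-/

open Polynomial Finset Complex

namespace IsPrimitiveRoot

theorem prod_primitiveRoots_pow_of_coprime {R M : Type*} [CommRing R] [IsDomain R] [CommMonoid M]
    {n a : ℕ} [NeZero n] (ha : a.Coprime n) (f : R → M) :
    ∏ η ∈ primitiveRoots n R, f (η ^ a) = ∏ η ∈ primitiveRoots n R, f η := by
  rw [← prod_coe_sort _ (fun η => f (η ^ a)), ← prod_coe_sort _ f]
  exact Equiv.prod_comp (primitiveRootsPowEquivOfCoprime (R := R) ha) (fun η => f η)

theorem aeval_eq_zero_of_aeval_eq_zero {K : Type*} [Field K] [CharZero K] {n : ℕ} (hn : 0 < n)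
    {ζ η : K} (hζ : IsPrimitiveRoot ζ n) (hη : IsPrimitiveRoot η n) {p : ℚ[X]}
    (hp : aeval ζ p = 0) : aeval η p = 0 := by
  have hdvd := minpoly.dvd ℚ ζ hp
  rw [← cyclotomic_eq_minpoly_rat hζ hn, cyclotomic_eq_minpoly_rat hη hn] at hdvd
  exact aeval_eq_zero_of_dvd_aeval_eq_zero hdvd (minpoly.aeval ℚ η)

theorem abs_eq_one_of_pow_mul_add_one_sq_eq {n : ℕ} (hn : Odd n) {ζ : ℂ}
    (hζ : IsPrimitiveRoot ζ n) {a b : ℕ} (ha : a.Coprime n) (hb : b.Coprime n) {r : ℚ}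
    (h : ζ ^ b * (ζ ^ a + 1) ^ 2 = r * (ζ ^ a * (ζ ^ b + 1) ^ 2)) : |r| = 1 := by
  have hn0 : 0 < n := hn.pos
  have : NeZero n := ⟨hn0.ne'⟩
  have hconj : ∀ η ∈ primitiveRoots n ℂ,
      η ^ b * (η ^ a + 1) ^ 2 = r * (η ^ a * (η ^ b + 1) ^ 2) := by
    intro η hη
    have hp := hζ.aeval_eq_zero_of_aeval_eq_zero hn0 ((mem_primitiveRoots hn0).1 hη)
      (p := X ^ b * (X ^ a + 1) ^ 2 - C r * (X ^ a * (X ^ b + 1) ^ 2)) (by simp [h])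
    simpa [sub_eq_zero] using hp
  have hnorm : ∀ η ∈ primitiveRoots n ℂ, ‖η ^ a + 1‖ ^ 2 = |(r : ℝ)| * ‖η ^ b + 1‖ ^ 2 := by
    intro η hη
    have h1 : ‖η‖ = 1 := ((mem_primitiveRoots hn0).1 hη).norm'_eq_one hn0.ne'
    simpa [h1] using congrArg norm (hconj η hη)
  have hprod := prod_congr rfl hnorm
  rw [prod_mul_distrib, prod_const, prod_primitiveRoots_pow_of_coprime ha (‖· + 1‖ ^ 2),
    prod_primitiveRoots_pow_of_coprime hb (‖· + 1‖ ^ 2)] at hprod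
  have hP : ∏ η ∈ primitiveRoots n ℂ, ‖η + 1‖ ^ 2 ≠ 0 := by
    refine prod_ne_zero_iff.2 fun η hη hη0 => ?_
    have h1 : η = -1 := by simpa [add_eq_zero_iff_eq_neg] using hη0
    have := ((mem_primitiveRoots hn0).1 hη).pow_eq_one
    rw [h1, hn.neg_one_pow] at this
    norm_num at this
  have hr : |(r : ℝ)| ^ #(primitiveRoots n ℂ) = 1 := by
    simpa [hP] using hprod.symm
  rw [hζ.card_primitiveRoots, pow_eq_one_iff_of_nonneg (abs_nonneg _)
    (Nat.totient_pos.2 hn0).ne'] at hr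
  exact_mod_cast hr

end IsPrimitiveRoot

theorem Complex.two_mul_cos_sq_mul_exp (θ : ℝ) :
    ((2 * Real.cos θ : ℝ) : ℂ) ^ 2 * exp (2 * θ * I) = (exp (2 * θ * I) + 1) ^ 2 := by
  have h2 : exp (2 * θ * I) = exp (θ * I) ^ 2 := by rw [← exp_nat_mul]; ring_nf
  push_cast
  rw [cos, h2, neg_mul, exp_neg]
  field_simp

theorem Real.pi_mul_div_mem_Ico {k n : ℕ} (h : 2 * k < n) :
    Real.pi * k / n ∈ Set.Ico 0 (Real.pi / 2) := by
  have hn : (0 : ℝ) < n := by exact_mod_cast (show 0 < n by omega)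
  have hkn : (2 * k : ℝ) < n := by exact_mod_cast h
  refine ⟨by positivity, ?_⟩
  rw [div_lt_iff₀ hn]
  nlinarith [Real.pi_pos]

/-- For an odd prime `n` and `1 ≤ k, k' ≤ (n−1)/2`, if `cos(πk/n) / cos(πk'/n)` is
rational then `k = k'`. -/
theorem lissajous_stmt9 (n : ℕ) (hp : n.Prime) (hodd : Odd n) (k k' : ℕ)
    (hk1 : 1 ≤ k) (hk2 : k ≤ (n - 1) / 2) (hk'1 : 1 ≤ k') (hk'2 : k' ≤ (n - 1) / 2)
    (q : ℚ) (h : Real.cos (Real.pi * k / n) / Real.cos (Real.pi * k' / n) = (q : ℝ)) :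
    k = k' := by
  have hθ := Real.pi_mul_div_mem_Ico (k := k) (n := n) (by omega)
  have hθ' := Real.pi_mul_div_mem_Ico (k := k') (n := n) (by omega)
  have hcos := Real.cos_pos_of_mem_Ioo ⟨by linarith [hθ.1, Real.pi_pos], hθ.2⟩
  have hcos' := Real.cos_pos_of_mem_Ioo ⟨by linarith [hθ'.1, Real.pi_pos], hθ'.2⟩
  have hrel : Real.cos (Real.pi * k / n) = q * Real.cos (Real.pi * k' / n) := by
    rw [← h, div_mul_cancel₀ _ hcos'.ne']
  have hζ := Complex.isPrimitiveRoot_exp n hp.ne_zero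
  have hpow : ∀ j : ℕ, exp (2 * Real.pi * I / n) ^ j = exp (2 * (Real.pi * j / n : ℝ) * I) := by
    intro j
    rw [← exp_nat_mul]
    push_cast
    ring_nf
  have hcop : ∀ j, 1 ≤ j → j ≤ (n - 1) / 2 → j.Coprime n := fun j hj1 hj2 =>
    (Nat.coprime_of_lt_prime (by omega) (by omega) hp).symm
  have hq : |q ^ 2| = 1 := by
    refine hζ.abs_eq_one_of_pow_mul_add_one_sq_eq hodd (hcop k hk1 hk2) (hcop k' hk'1 hk'2) ?_
    rw [hpow, hpow, ← two_mul_cos_sq_mul_exp, ← two_mul_cos_sq_mul_exp, hrel]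
    push_cast
    ring
  have hsq : Real.cos (Real.pi * k / n) ^ 2 = Real.cos (Real.pi * k' / n) ^ 2 := by
    rw [hrel, mul_pow, ← Rat.cast_pow, ← abs_sq q, hq, Rat.cast_one, one_mul]
  have hangle := Real.injOn_cos ⟨hθ.1, by linarith [hθ.2, Real.pi_pos]⟩
    ⟨hθ'.1, by linarith [hθ'.2, Real.pi_pos]⟩ ((sq_eq_sq₀ hcos.le hcos'.le).1 hsq)
  have hn : (n : ℝ) ≠ 0 := by exact_mod_cast hp.ne_zero
  field_simp at hangle
  exact_mod_cast hangle
end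

section
/- Let n ≥ 3 be an odd integer and let l, l' be integers with 1 ≤ l ≤ n−1 and 1 ≤ l' ≤ n−1, and let σ ∈ {1, −1}. If cos(2πl/n) + sin(2πl/n) = σ·(cos(2πl'/n) + sin(2πl'/n)), then l = l' and σ = 1. -/
/-!
Since `cos x + sin x = √2 cos (x - π/4)`, the equation `cos x + sin x = cos y + sin y` holds
exactly when `y ≡ x` or `x + y ≡ π/2 (mod 2π)`, and the sign `σ = -1` is absorbed by shifting
`y` by `π`. For `x = 2πl/n`, `y = 2πl'/n` (`+ π`) these congruences become integer equations:
all but `l' ≡ l (mod n)` force `n` to be even, and that one forces `l = l'` because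
`0 ≤ l, l' < n`.
-/

open Real

theorem cos_add_sin_eq_sqrt_two_mul_cos (x : ℝ) : cos x + sin x = √2 * cos (x - π / 4) := by
  rw [cos_sub, cos_pi_div_four, sin_pi_div_four]
  linear_combination (-(cos x + sin x) / 2) * mul_self_sqrt (zero_le_two : (0 : ℝ) ≤ 2)

theorem cos_add_sin_eq_cos_add_sin_iff {x y : ℝ} :
    cos x + sin x = cos y + sin y ↔ ∃ k : ℤ, y = x + 2 * k * π ∨ x + y = π / 2 + 2 * k * π := by
  simp only [cos_add_sin_eq_sqrt_two_mul_cos, mul_right_inj' (by positivity : √2 ≠ 0),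
    cos_eq_cos_iff]
  exact exists_congr fun k => or_congr ⟨fun h => by linarith, fun h => by linarith⟩
    ⟨fun h => by linarith, fun h => by linarith⟩

theorem neg_cos_add_sin (x : ℝ) : -(cos x + sin x) = cos (x + π) + sin (x + π) := by
  rw [cos_add_pi, sin_add_pi, neg_add]

theorem exists_int_of_cos_add_sin_pi_mul_div_eq {N p q : ℤ} (hN : N ≠ 0)
    (h : cos (π * p / N) + sin (π * p / N) = cos (π * q / N) + sin (π * q / N)) :
    ∃ k : ℤ, q = p + 2 * k * N ∨ 2 * (p + q) = (1 + 4 * k) * N := by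
  have hN' : (N : ℝ) ≠ 0 := by exact_mod_cast hN
  obtain ⟨k, hk | hk⟩ := cos_add_sin_eq_cos_add_sin_iff.mp h <;> field_simp at hk
  · have : (q : ℝ) = p + 2 * k * N := by nlinarith [pi_pos]
    exact ⟨k, Or.inl (by exact_mod_cast this)⟩
  · have : 2 * ((p : ℝ) + q) = (1 + 4 * k) * N := by nlinarith [pi_pos]
    exact ⟨k, Or.inr (by exact_mod_cast this)⟩

theorem lissajous_stmt10_general (n : ℕ) (hodd : Odd n) (l l' : ℕ)
    (hl2 : l ≤ n - 1) (hl'2 : l' ≤ n - 1)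
    (σ : ℝ) (hσ : σ = 1 ∨ σ = -1)
    (h : Real.cos (2 * Real.pi * l / n) + Real.sin (2 * Real.pi * l / n) =
      σ * (Real.cos (2 * Real.pi * l' / n) + Real.sin (2 * Real.pi * l' / n))) :
    l = l' ∧ σ = 1 := by
  have hn : (n : ℤ) ≠ 0 := by exact_mod_cast hodd.pos.ne'
  obtain ⟨m, hm⟩ : Odd (n : ℤ) := by exact_mod_cast hodd
  have angle (j : ℕ) : 2 * π * j / n = π * ((2 * j : ℤ) : ℝ) / (n : ℤ) := by push_cast; ring
  rcases hσ with rfl | rfl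
  · rw [one_mul, angle l, angle l'] at h
    obtain ⟨k, hk | hk⟩ := exists_int_of_cos_add_sin_pi_mul_div_eq hn h
    · have hmod : l ≡ l' [MOD n] := Nat.modEq_iff_dvd.mpr ⟨k, by linarith⟩
      exact ⟨hmod.eq_of_lt_of_lt (by omega) (by omega), rfl⟩
    · ring_nf at hk; omega
  · have angle_add_pi : 2 * π * l' / n + π = π * ((2 * l' + n : ℤ) : ℝ) / (n : ℤ) := by
      have : (n : ℝ) ≠ 0 := by exact_mod_cast hn
      push_cast; field_simp
    rw [neg_one_mul, neg_cos_add_sin, angle l, angle_add_pi] at h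
    obtain ⟨k, hk | hk⟩ := exists_int_of_cos_add_sin_pi_mul_div_eq hn h <;> ring_nf at hk <;> omega

/-- For odd `n ≥ 3`, integers `1 ≤ l, l' ≤ n−1` and a sign `σ = ±1`, the identity
`cos(2πl/n) + sin(2πl/n) = σ·(cos(2πl'/n) + sin(2πl'/n))` forces `l = l'` and `σ = 1`. -/
theorem lissajous_stmt10 (n : ℕ) (hn : 3 ≤ n) (hodd : Odd n) (l l' : ℕ)
    (hl1 : 1 ≤ l) (hl2 : l ≤ n - 1) (hl'1 : 1 ≤ l') (hl'2 : l' ≤ n - 1)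
    (σ : ℝ) (hσ : σ = 1 ∨ σ = -1)
    (h : Real.cos (2 * Real.pi * l / n) + Real.sin (2 * Real.pi * l / n) =
      σ * (Real.cos (2 * Real.pi * l' / n) + Real.sin (2 * Real.pi * l' / n))) :
    l = l' ∧ σ = 1 :=
  lissajous_stmt10_general n hodd l l' hl2 hl'2 σ hσ h
end

section
/- Let n be an odd prime, let k, k' be integers with 1 ≤ k ≤ n−1 and 1 ≤ k' ≤ n−1, and let σ ∈ {1, −1}. If sin(πk/n) · sin(2πk'/n + π/4) = σ · sin(πk'/n) · sin(2πk/n + π/4), then k = k' and σ = 1. -/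
/-!
Write `n + 1 = 2c`. Since `π k / n ≡ 2π (c k) / n (mod π)`, every angle becomes a multiple of
`2π / n`, and with `ω = exp (2π i / n)` the relation turns into `A + i B = 0` with
`A, B ∈ ℚ(ω)`. For odd `n`, `i ∉ ℚ(ω)` (the roots of unity of `ℚ(ω)` are the `±ωʳ`), so
`A = B = 0`, which leaves `ω^(ck + k') - ω^(k' - ck) = ε (ω^(ck' + k) - ω^(k - ck'))` with
`ε = ±σ`. As `Φₙ` is the minimal polynomial of `ω` and has degree `n - 1`, a sum of two powers of
`ω` determines the exponents modulo `n`; comparing them gives `k = k'` and `ε = 1`.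
-/

open Polynomial IntermediateField
open scoped Real

theorem Subfield.eq_zero_of_add_mul_eq_zero {L : Type*} [Field L] {K : Subfield L} {i a b : L}
    (hi : i ∉ K) (ha : a ∈ K) (hb : b ∈ K) (h : a + i * b = 0) : a = 0 ∧ b = 0 := by
  have hb0 : b = 0 := by
    by_contra hb0
    have hi' : i = -a / b := by
      field_simp
      linear_combination h
    exact hi (hi' ▸ div_mem (neg_mem ha) hb)
  exact ⟨by simpa [hb0] using h, hb0⟩

theorem Complex.I_notMem_adjoin_primitiveRoot {n : ℕ} (hn : Odd n) {ω : ℂ}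
    (hω : IsPrimitiveRoot ω n) : Complex.I ∉ ℚ⟮ω⟯ := by
  intro hI
  have : NeZero n := ⟨hn.pos.ne'⟩
  have : IsCyclotomicExtension {n} ℚ ℚ⟮ω⟯ := by
    change IsCyclotomicExtension {n} ℚ ℚ⟮ω⟯.toSubalgebra
    rw [adjoin_simple_toSubalgebra_of_isAlgebraic (hω.isIntegral hn.pos).tower_top.isAlgebraic]
    exact hω.adjoin_isCyclotomicExtension ℚ
  have : NumberField ℚ⟮ω⟯ := IsCyclotomicExtension.numberField {n} ℚ _
  have hζ : IsPrimitiveRoot (⟨ω, mem_adjoin_simple_self ℚ ω⟩ : ℚ⟮ω⟯) n :=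
    IsPrimitiveRoot.coe_submonoidClass_iff.mp hω
  have hfin : IsOfFinOrder (⟨Complex.I, hI⟩ : ℚ⟮ω⟯) :=
    isOfFinOrder_iff_pow_eq_one.mpr ⟨4, by norm_num, Subtype.ext (by simp)⟩
  obtain ⟨r, -, hr⟩ := hζ.exists_pow_or_neg_mul_pow_of_isOfFinOrder hn hfin
  have hsq : Complex.I ^ 2 = (ω ^ r) ^ 2 := by
    rcases hr with hr | hr <;> simp only [Subtype.ext_iff] at hr <;> simp [hr]
  have h : (-1 : ℂ) ^ n = 1 :=
    calc (-1 : ℂ) ^ n = (Complex.I ^ 2) ^ n := by rw [Complex.I_sq]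
      _ = ((ω ^ n) ^ r) ^ 2 := by rw [hsq]; ring
      _ = 1 := by simp [hω.pow_eq_one]
  norm_num [hn.neg_one_pow] at h

theorem IsPrimitiveRoot.zpow_eq_pow_val {G : Type*} [CommGroupWithZero G] {ω : G} {n : ℕ}
    [NeZero n] (hω : IsPrimitiveRoot ω n) (m : ℤ) : ω ^ m = ω ^ (m : ZMod n).val :=
  calc ω ^ m = ω ^ (m % n + n * (m / n)) := by rw [Int.emod_add_mul_ediv]
    _ = ω ^ (m : ZMod n).val := by
      rw [zpow_add₀ (hω.ne_zero (NeZero.ne n)), zpow_mul, zpow_natCast, hω.pow_eq_one, one_zpow,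
        mul_one, ← ZMod.val_intCast, zpow_natCast]

section RootsOfUnity

variable {K : Type*} [Field K] [CharZero K] {p : ℕ} [hp : Fact p.Prime] {ω : K}

theorem IsPrimitiveRoot.pow_add_pow_eq_pow_add_pow (hω : IsPrimitiveRoot ω p) {a b c d : ℕ}
    (ha : a < p) (hb : b < p) (hc : c < p) (hd : d < p) (h : ω ^ a + ω ^ b = ω ^ c + ω ^ d) :
    a = c ∧ b = d ∨ a = d ∧ b = c := by
  set P : ℚ[X] := X ^ a + X ^ b - X ^ c - X ^ d
  have hdvd : cyclotomic p ℚ ∣ P := by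
    rw [cyclotomic_eq_minpoly_rat hω hp.out.pos]
    exact minpoly.dvd ℚ ω (by simp [P, h])
  have hdeg : P.natDegree ≤ (cyclotomic p ℚ).natDegree := by
    rw [natDegree_cyclotomic, Nat.totient_prime hp.out]
    simp only [P]
    compute_degree
    all_goals omega
  -- the degree bound makes `P` a constant multiple of `Φₚ`, and `P(1) = 0` while `Φₚ(1) = p`
  have hP : P = 0 := by
    have hPΦ := eq_leadingCoeff_mul_of_monic_of_dvd_of_natDegree_le (cyclotomic.monic p ℚ) hdvd hdeg
    simpa [P, eval_one_cyclotomic_prime, hp.out.ne_zero] using congrArg (eval 1) hPΦ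
  have hca := congrArg (coeff · a) hP
  have hcb := congrArg (coeff · b) hP
  simp only [P, coeff_sub, coeff_add, coeff_X_pow, coeff_zero] at hca hcb
  grind

theorem IsPrimitiveRoot.zpow_add_zpow_eq_zpow_add_zpow (hω : IsPrimitiveRoot ω p) {a b c d : ℤ}
    (h : ω ^ a + ω ^ b = ω ^ c + ω ^ d) :
    (a : ZMod p) = c ∧ (b : ZMod p) = d ∨ (a : ZMod p) = d ∧ (b : ZMod p) = c := by
  simp only [hω.zpow_eq_pow_val] at h
  simpa only [(ZMod.val_injective p).eq_iff] using
    hω.pow_add_pow_eq_pow_add_pow (ZMod.val_lt _) (ZMod.val_lt _) (ZMod.val_lt _) (ZMod.val_lt _) h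

theorem IsPrimitiveRoot.intCast_eq_of_zpow_sub_inv_mul_eq (hω : IsPrimitiveRoot ω p)
    {j j' k k' : ℤ} (hj : 2 * (j : ZMod p) = k) (hj' : 2 * (j' : ZMod p) = k')
    (hk : (k : ZMod p) ≠ 0) {ε : K} (hε : ε = 1 ∨ ε = -1)
    (h : (ω ^ j - (ω ^ j)⁻¹) * ω ^ k' = ε * ((ω ^ j' - (ω ^ j')⁻¹) * ω ^ k)) :
    (k : ZMod p) = k' ∧ ε = 1 := by
  have hω0 : ω ≠ 0 := hω.ne_zero hp.out.ne_zero
  have hexpand (a b : ℤ) : (ω ^ a - (ω ^ a)⁻¹) * ω ^ b = ω ^ (a + b) - ω ^ (b - a) := by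
    rw [sub_mul, ← zpow_neg, ← zpow_add₀ hω0, ← zpow_add₀ hω0, neg_add_eq_sub]
  have h2 : (2 : ZMod p) ≠ 0 := fun h2 ↦ hk (by rw [← hj, h2, zero_mul])
  rw [hexpand, hexpand] at h
  rcases hε with rfl | rfl
  · refine ⟨?_, rfl⟩
    rcases hω.zpow_add_zpow_eq_zpow_add_zpow (a := j + k') (b := k - j') (c := j' + k)
      (d := k' - j) (by linear_combination h) with ⟨e, -⟩ | ⟨e, -⟩ <;> push_cast at e
    · linear_combination -2 * e + hj - hj'
    · exact absurd (by linear_combination e - hj) hk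
  · exfalso
    rcases hω.zpow_add_zpow_eq_zpow_add_zpow (a := j + k') (b := j' + k) (c := k - j')
      (d := k' - j) (by linear_combination h) with ⟨e, e'⟩ | ⟨e, -⟩ <;> push_cast at e
    · push_cast at e'
      have : (k : ZMod p) * (2 * 2) = 0 := by linear_combination e + 3 * e' - 2 * hj - 2 * hj'
      simp [h2, hk] at this
    · exact hk (by linear_combination e - hj)

theorem IsPrimitiveRoot.eq_of_pow_mul_sub_inv_mul_eq (hω : IsPrimitiveRoot ω p) {c : ℕ}
    (hc : p + 1 = 2 * c) {k k' : ℕ} (hk1 : 1 ≤ k) (hk : k < p) (hk' : k' < p) {ε : K}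
    (hε : ε = 1 ∨ ε = -1)
    (h : (ω ^ (c * k) - (ω ^ (c * k))⁻¹) * ω ^ k' =
      ε * ((ω ^ (c * k') - (ω ^ (c * k'))⁻¹) * ω ^ k)) :
    k = k' ∧ ε = 1 := by
  have h2c : (2 * c : ZMod p) = 1 := by simpa using (congrArg (Nat.cast : ℕ → ZMod p) hc).symm
  have hk0 : ((k : ℤ) : ZMod p) ≠ 0 := by
    rw [Int.cast_natCast, Ne, ZMod.natCast_eq_zero_iff]
    exact fun hdvd ↦ absurd (Nat.le_of_dvd (by omega) hdvd) (by omega)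
  obtain ⟨hkk', hε1⟩ := hω.intCast_eq_of_zpow_sub_inv_mul_eq (j := ↑(c * k)) (j' := ↑(c * k'))
    (k := k) (k' := k')
    (by push_cast; linear_combination (k : ZMod p) * h2c)
    (by push_cast; linear_combination (k' : ZMod p) * h2c) hk0 hε (by exact_mod_cast h)
  rw [Int.cast_natCast, Int.cast_natCast, ZMod.natCast_eq_natCast_iff',
    Nat.mod_eq_of_lt hk, Nat.mod_eq_of_lt hk'] at hkk'
  exact ⟨hkk', hε1⟩

end RootsOfUnity

namespace Real

theorem sin_two_pi_mul_div_eq_neg_one_pow_mul_sin {n c : ℕ} (hn : n ≠ 0) (hc : n + 1 = 2 * c)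
    (m : ℕ) : sin (2 * π * ↑(c * m) / n) = (-1) ^ m * sin (π * m / n) := by
  have hcR : (2 * c : ℝ) = n + 1 := by exact_mod_cast hc.symm
  rw [← sin_add_nat_mul_pi]
  congr 1
  push_cast
  field_simp
  linear_combination (m : ℝ) * hcR

theorem sin_mul_sin_add_cos_eq_of_sin_mul_sin_add_pi_div_four_eq {n c k k' : ℕ} (hn : n ≠ 0)
    (hc : n + 1 = 2 * c) {σ : ℝ}
    (h : sin (π * k / n) * sin (2 * π * k' / n + π / 4) =
      σ * (sin (π * k' / n) * sin (2 * π * k / n + π / 4))) :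
    sin (2 * π * ↑(c * k) / n) * (sin (2 * π * k' / n) + cos (2 * π * k' / n)) =
      σ * (-1) ^ (k + k') *
        (sin (2 * π * ↑(c * k') / n) * (sin (2 * π * k / n) + cos (2 * π * k / n))) := by
  rw [sin_add, sin_add, sin_pi_div_four, cos_pi_div_four] at h
  rw [sin_two_pi_mul_div_eq_neg_one_pow_mul_sin hn hc,
    sin_two_pi_mul_div_eq_neg_one_pow_mul_sin hn hc]
  have hsq : ((-1 : ℝ) ^ k') ^ 2 = 1 := by rw [← pow_mul, pow_mul']; simp
  apply mul_right_cancel₀ (by positivity : √2 / 2 ≠ 0)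
  linear_combination (-1) ^ k * h - σ * (-1) ^ k * sin (π * k' / n) *
    (sin (2 * π * k / n) + cos (2 * π * k / n)) * (√2 / 2) * hsq

end Real

namespace Complex

theorem four_mul_I_mul_sin_mul_sin_add_cos (x y : ℂ) :
    4 * I * (sin x * (sin y + cos y)) =
      (exp (x * I) - (exp (x * I))⁻¹) * ((1 - I) * exp (y * I) + (1 + I) * (exp (y * I))⁻¹) := by
  simp only [sin, cos, neg_mul, exp_neg]
  linear_combination ((exp (x * I) - (exp (x * I))⁻¹) * (exp (y * I) - (exp (y * I))⁻¹) * I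
    - (exp (x * I) - (exp (x * I))⁻¹) * (exp (y * I) + (exp (y * I))⁻¹)) * I_sq

theorem exp_sub_inv_mul_eq_of_sin_mul_sin_add_cos_eq {K : Subfield ℂ} (hI : I ∉ K)
    {x y x' y' ε : ℝ} (hx : exp (x * I) ∈ K) (hy : exp (y * I) ∈ K) (hx' : exp (x' * I) ∈ K)
    (hy' : exp (y' * I) ∈ K) (hε : (ε : ℂ) ∈ K)
    (h : Real.sin x * (Real.sin y + Real.cos y) =
      ε * (Real.sin x' * (Real.sin y' + Real.cos y'))) :
    (exp (x * I) - (exp (x * I))⁻¹) * exp (y * I) =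
      ε * ((exp (x' * I) - (exp (x' * I))⁻¹) * exp (y' * I)) := by
  have hC := congrArg ((↑) : ℝ → ℂ) h
  push_cast at hC
  have e := four_mul_I_mul_sin_mul_sin_add_cos x y
  have e' := four_mul_I_mul_sin_mul_sin_add_cos x' y'
  set u := exp (x * I)
  set v := exp (y * I)
  set u' := exp (x' * I)
  set v' := exp (y' * I)
  have hsub : ∀ w ∈ K, w - w⁻¹ ∈ K := fun w hw ↦ sub_mem hw (inv_mem hw)
  -- `4 I (lhs - rhs)` is `A + I B` with `A, B ∈ K`, and the claim is `A - B = 0`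
  obtain ⟨hA, hB⟩ := Subfield.eq_zero_of_add_mul_eq_zero hI
    (sub_mem (mul_mem (hsub u hx) (add_mem hy (inv_mem hy)))
      (mul_mem hε (mul_mem (hsub u' hx') (add_mem hy' (inv_mem hy')))))
    (sub_mem (mul_mem (hsub u hx) (sub_mem (inv_mem hy) hy))
      (mul_mem hε (mul_mem (hsub u' hx') (sub_mem (inv_mem hy') hy'))))
    (by linear_combination 4 * I * hC - e + ε * e')
  linear_combination (hA - hB) / 2

theorem exp_two_pi_I_div_pow_sub_inv_mul_eq {n : ℕ} (hn : Odd n) {a b a' b' : ℕ} {ε : ℝ}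
    (hε : ε = 1 ∨ ε = -1)
    (h : Real.sin (2 * π * a / n) * (Real.sin (2 * π * b / n) + Real.cos (2 * π * b / n)) =
      ε * (Real.sin (2 * π * a' / n) * (Real.sin (2 * π * b' / n) + Real.cos (2 * π * b' / n)))) :
    (exp (2 * π * I / n) ^ a - (exp (2 * π * I / n) ^ a)⁻¹) * exp (2 * π * I / n) ^ b =
      ε * ((exp (2 * π * I / n) ^ a' - (exp (2 * π * I / n) ^ a')⁻¹) *
        exp (2 * π * I / n) ^ b') := by
  set ω := exp (2 * π * I / n)
  have hexp (m : ℕ) : exp (↑(2 * π * m / n) * I) = ω ^ m := by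
    rw [← exp_nat_mul]
    push_cast
    ring_nf
  have hmem (m : ℕ) : exp (↑(2 * π * m / n) * I) ∈ ℚ⟮ω⟯.toSubfield :=
    hexp m ▸ pow_mem (mem_adjoin_simple_self ℚ ω) m
  simpa only [hexp] using exp_sub_inv_mul_eq_of_sin_mul_sin_add_cos_eq
    (I_notMem_adjoin_primitiveRoot hn (isPrimitiveRoot_exp n hn.pos.ne'))
    (hmem a) (hmem b) (hmem a') (hmem b') (by rcases hε with hε | hε <;> simp [hε]) h

end Complex

theorem lissajous_stmt11_general (n : ℕ) (hp : n.Prime) (hodd : Odd n) (k k' : ℕ)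
    (hk1 : 1 ≤ k) (hk2 : k ≤ n - 1) (hk'2 : k' ≤ n - 1)
    (σ : ℝ) (hσ : σ = 1 ∨ σ = -1)
    (h : Real.sin (Real.pi * k / n) * Real.sin (2 * Real.pi * k' / n + Real.pi / 4) =
      σ * (Real.sin (Real.pi * k' / n) * Real.sin (2 * Real.pi * k / n + Real.pi / 4))) :
    k = k' ∧ σ = 1 := by
  have : Fact n.Prime := ⟨hp⟩
  obtain ⟨c, hc⟩ : ∃ c, n + 1 = 2 * c := by
    obtain ⟨m, rfl⟩ := hodd
    exact ⟨m + 1, by ring⟩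
  have hε : σ * (-1) ^ (k + k') = 1 ∨ σ * (-1) ^ (k + k') = -1 := by
    rcases hσ with rfl | rfl <;> rcases neg_one_pow_eq_or ℝ (k + k') with hpow | hpow <;>
      simp [hpow]
  have hrel := Complex.exp_two_pi_I_div_pow_sub_inv_mul_eq hodd hε
    (Real.sin_mul_sin_add_cos_eq_of_sin_mul_sin_add_pi_div_four_eq hp.ne_zero hc h)
  obtain ⟨rfl, hε1⟩ := (Complex.isPrimitiveRoot_exp n hp.ne_zero).eq_of_pow_mul_sub_inv_mul_eq hc
    hk1 (by omega) (by omega) (by rcases hε with hε | hε <;> simp [hε]) hrel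
  refine ⟨rfl, ?_⟩
  simpa [← two_mul, pow_mul] using (by exact_mod_cast hε1 : σ * (-1) ^ (k + k) = 1)

/-- For an odd prime `n`, integers `1 ≤ k, k' ≤ n−1` and a sign `σ = ±1`, the
identity `sin(πk/n)·sin(2πk'/n + π/4) = σ·sin(πk'/n)·sin(2πk/n + π/4)` forces `k = k'` and
`σ = 1`. -/
theorem lissajous_stmt11 (n : ℕ) (hp : n.Prime) (hodd : Odd n) (k k' : ℕ)
    (hk1 : 1 ≤ k) (hk2 : k ≤ n - 1) (hk'1 : 1 ≤ k') (hk'2 : k' ≤ n - 1)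
    (σ : ℝ) (hσ : σ = 1 ∨ σ = -1)
    (h : Real.sin (Real.pi * k / n) * Real.sin (2 * Real.pi * k' / n + Real.pi / 4) =
      σ * (Real.sin (Real.pi * k' / n) * Real.sin (2 * Real.pi * k / n + Real.pi / 4))) :
    k = k' ∧ σ = 1 :=
  lissajous_stmt11_general n hp hodd k k' hk1 hk2 hk'2 σ hσ h
end

section
/- Let n₁ and n₂ be distinct odd primes, let k, k' be integers with 1 ≤ k ≤ n₁−1 and 1 ≤ k' ≤ n₁−1, let l, l' be integers with 1 ≤ l ≤ n₂−1 and 1 ≤ l' ≤ n₂−1, and let σ ∈ {1, −1}. Then sin(2πk/n₁) · sin(πk'/n₁) · (cos(2πl/n₂) + sin(2πl/n₂)) ≠ σ · sin(2πl'/n₂) · sin(πk/n₁) · (cos(2πk'/n₁) + sin(2πk'/n₁)). -/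
open Complex Polynomial IntermediateField


private lemma aux_dvd {p q j : ℕ} (hp : p.Prime) (hoddp : Odd p) (hq : q.Prime)
    (hne : p ≠ q) (hj1 : 1 ≤ j) (hj2 : j ≤ p - 1) (hdvd : p ∣ 4 * j * q) : False := by
  have hp2 : p ≠ 2 := by
    rintro rfl
    exact (Nat.not_odd_iff_even.mpr even_two) hoddp
  have hple := hp.two_le
  rcases (Nat.Prime.dvd_mul hp).1 hdvd with h | h
  · rcases (Nat.Prime.dvd_mul hp).1 h with h2 | h2
    · have h3 : p ∣ 2 * 2 := by simpa [show (4:ℕ) = 2*2 by norm_num] using h2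
      rcases (Nat.Prime.dvd_mul hp).1 h3 with h4 | h4 <;>
        exact hp2 ((Nat.prime_dvd_prime_iff_eq hp Nat.prime_two).1 h4)
    · have h4 := Nat.le_of_dvd (by omega) h2
      omega
  · exact hne ((Nat.prime_dvd_prime_iff_eq hp hq).1 h)

private lemma key_alg (u1 u2 u3 v3 u4 u5 u6 v6 s : ℂ)
    (h : (u1*(-I/2)) * (u2*(-I/2)) * (v3/2 + u3*(-I/2))
        = s * ((u4*(-I/2)) * (u5*(-I/2)) * (v6/2 + u6*(-I/2)))) :
    (-(u1*u2*v3) + s*(u4*u5*v6)) + (u1*u2*u3 - s*(u4*u5*u6)) * I = 0 := by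
  linear_combination 8*h +
    ((-(u1*u2*v3) + s*(u4*u5*v6)) + (u1*u2*u3 - s*(u4*u5*u6)) * I) * Complex.I_sq

private lemma I_notMem {m : ℕ} (hm : Odd m) (hm0 : m ≠ 0) :
    (I : ℂ) ∉ IntermediateField.adjoin ℚ
      {(Complex.exp (2 * Real.pi * I / ((2 * m : ℕ) : ℂ)) : ℂ)} := by
  set ζ : ℂ := Complex.exp (2 * Real.pi * I / ((2 * m : ℕ) : ℂ)) with hζdef
  have hζ : IsPrimitiveRoot ζ (2 * m) := Complex.isPrimitiveRoot_exp _ (by omega)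
  intro hIK
  set K := IntermediateField.adjoin ℚ {ζ} with hKdef
  have hζK : ζ ∈ K := IntermediateField.mem_adjoin_simple_self ℚ ζ
  have hζint : IsIntegral ℚ ζ := (hζ.isIntegral (by omega)).tower_top
  haveI := IntermediateField.adjoin.finiteDimensional hζint
  have hfin : Module.finrank ℚ K = (2 * m).totient := by
    rw [IntermediateField.adjoin.finrank hζint,
      ← Polynomial.cyclotomic_eq_minpoly_rat hζ (by omega), Polynomial.natDegree_cyclotomic]
  have hmC : (m : ℂ) ≠ 0 := Nat.cast_ne_zero.2 hm0
  have hcop : Nat.Coprime 4 m := by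
    have h2 : Nat.Coprime 2 m := Nat.coprime_two_left.mpr hm
    simpa [show (4:ℕ) = 2^2 by norm_num] using h2.pow_left 2
  obtain ⟨c, d, hcd⟩ : IsCoprime (4 : ℤ) (m : ℤ) := by
    have := hcop.isCoprime
    simpa using this
  set η : ℂ := Complex.exp (2 * Real.pi * I / ((4 * m : ℕ) : ℂ)) with hηdef
  have hη : IsPrimitiveRoot η (4 * m) := Complex.isPrimitiveRoot_exp _ (by omega)
  have hζ2 : ζ ^ 2 = Complex.exp (2 * Real.pi * I / (m : ℂ)) := by
    rw [hζdef, ← Complex.exp_nat_mul]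
    congr 1
    push_cast
    field_simp
  have hI4 : Complex.exp (2 * Real.pi * I / (4 : ℂ)) = I := by
    rw [show (2 * (Real.pi:ℂ) * I / 4) = ((Real.pi / 2 : ℝ) : ℂ) * I by push_cast; ring,
      Complex.exp_mul_I]
    simp [← Complex.ofReal_cos, ← Complex.ofReal_sin]
  have hcdC : (c : ℂ) * 4 + (d : ℂ) * (m : ℂ) = 1 := by exact_mod_cast congrArg (Int.cast : ℤ → ℂ) hcd
  have hfrac : (c:ℂ)/(m:ℂ) + (d:ℂ)/4 = 1/(4*(m:ℂ)) := by
    have h0 : (c:ℂ)/(m:ℂ) + (d:ℂ)/4 = ((c:ℂ)*4 + (m:ℂ)*(d:ℂ))/((m:ℂ)*4) :=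
      div_add_div _ _ hmC (by norm_num)
    rw [h0, show ((c:ℂ)*4 + (m:ℂ)*(d:ℂ)) = 1 from by linear_combination hcdC,
      show ((m:ℂ)*4) = 4*(m:ℂ) from by ring]
  have hexps : (c:ℂ) * (2*Real.pi*I/(m:ℂ)) + (d:ℂ) * (2*(Real.pi:ℂ)*I/4)
      = 2*Real.pi*I/((4*m:ℕ):ℂ) := by
    have h4m : ((4*m:ℕ):ℂ) = 4*(m:ℂ) := by push_cast; ring
    rw [h4m, show (c:ℂ) * (2*Real.pi*I/(m:ℂ)) + (d:ℂ) * (2*(Real.pi:ℂ)*I/4)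
      = (2*Real.pi*I) * ((c:ℂ)/(m:ℂ) + (d:ℂ)/4) from by ring, hfrac]
    ring
  have hηeq : η = (ζ ^ 2) ^ c * I ^ d := by
    calc η = Complex.exp ((c:ℂ) * (2*Real.pi*I/(m:ℂ)) + (d:ℂ) * (2*(Real.pi:ℂ)*I/4)) := by
            rw [hexps]
      _ = Complex.exp (2*Real.pi*I/(m:ℂ)) ^ c * Complex.exp (2*(Real.pi:ℂ)*I/4) ^ d := by
            rw [Complex.exp_add, Complex.exp_int_mul, Complex.exp_int_mul]
      _ = (ζ ^ 2) ^ c * I ^ d := by rw [← hζ2, hI4]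
  have hηK : η ∈ K := by
    rw [hηeq]
    exact mul_mem (zpow_mem (pow_mem hζK 2) c) (zpow_mem hIK d)
  have hb : (minpoly ℚ (⟨η, hηK⟩ : K)).natDegree ≤ Module.finrank ℚ K :=
    minpoly.natDegree_le _
  rw [hfin] at hb
  have hmin : minpoly ℚ (⟨η, hηK⟩ : K) = cyclotomic (4 * m) ℚ := by
    have h1 : minpoly ℚ (algebraMap K ℂ ⟨η, hηK⟩) = minpoly ℚ (⟨η, hηK⟩ : K) :=
      minpoly.algebraMap_eq (algebraMap K ℂ).injective _
    have h2 : algebraMap K ℂ (⟨η, hηK⟩ : K) = η := rfl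
    rw [← h1, h2]
    exact (cyclotomic_eq_minpoly_rat hη (by omega)).symm
  rw [hmin, natDegree_cyclotomic] at hb
  have e1 : (4 * m).totient = 2 * m.totient := by
    rw [Nat.totient_mul hcop]
    norm_num [show Nat.totient 4 = 2 by decide]
  have e2 : (2 * m).totient = m.totient := by
    rw [Nat.totient_mul (Nat.coprime_two_left.mpr hm), Nat.totient_two, one_mul]
  have e3 : 0 < m.totient := Nat.totient_pos.mpr (by omega)
  omega

/-- For distinct odd primes `n₁, n₂`, integers `1 ≤ k, k' ≤ n₁−1`,
`1 ≤ l, l' ≤ n₂−1` and a sign `σ = ±1`, one always has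
`sin(2πk/n₁)·sin(πk'/n₁)·(cos(2πl/n₂) + sin(2πl/n₂)) ≠
 σ·sin(2πl'/n₂)·sin(πk/n₁)·(cos(2πk'/n₁) + sin(2πk'/n₁))`. -/
theorem lissajous_stmt12 (n₁ n₂ : ℕ) (hp₁ : n₁.Prime) (hp₂ : n₂.Prime)
    (hodd₁ : Odd n₁) (hodd₂ : Odd n₂) (hne : n₁ ≠ n₂)
    (k k' l l' : ℕ)
    (hk1 : 1 ≤ k) (hk2 : k ≤ n₁ - 1) (hk'1 : 1 ≤ k') (hk'2 : k' ≤ n₁ - 1)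
    (hl1 : 1 ≤ l) (hl2 : l ≤ n₂ - 1) (hl'1 : 1 ≤ l') (hl'2 : l' ≤ n₂ - 1)
    (σ : ℝ) (hσ : σ = 1 ∨ σ = -1) :
    Real.sin (2 * Real.pi * k / n₁) * Real.sin (Real.pi * k' / n₁) *
        (Real.cos (2 * Real.pi * l / n₂) + Real.sin (2 * Real.pi * l / n₂)) ≠
      σ * (Real.sin (2 * Real.pi * l' / n₂) * Real.sin (Real.pi * k / n₁) *
        (Real.cos (2 * Real.pi * k' / n₁) + Real.sin (2 * Real.pi * k' / n₁))) := by
  intro h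
  have hp1 := hp₁.two_le
  have hp2 := hp₂.two_le
  have hn₁ : (n₁ : ℝ) ≠ 0 := Nat.cast_ne_zero.2 (by omega)
  have hn₂ : (n₂ : ℝ) ≠ 0 := Nat.cast_ne_zero.2 (by omega)
  set m : ℕ := n₁ * n₂ with hm
  have hModd : Odd m := hodd₁.mul hodd₂
  have hm0 : m ≠ 0 := Nat.mul_ne_zero (by omega) (by omega)
  have hMR : ((2 * m : ℕ) : ℝ) ≠ 0 := Nat.cast_ne_zero.2 (by omega)
  set ζ : ℂ := Complex.exp (2 * Real.pi * I / ((2 * m : ℕ) : ℂ)) with hζdef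
  have hζ : IsPrimitiveRoot ζ (2 * m) := Complex.isPrimitiveRoot_exp _ (by omega)
  have hζ0 : ζ ≠ 0 := Complex.exp_ne_zero _
  set K := IntermediateField.adjoin ℚ {ζ} with hKdef
  have hζK : ζ ∈ K := IntermediateField.mem_adjoin_simple_self ℚ ζ
  have hIK : (I : ℂ) ∉ K := by
    rw [hKdef, hζdef]
    exact I_notMem hModd hm0
  -- exponential description of powers of ζ
  have hexp : ∀ a : ℕ, Complex.exp ((((2 * Real.pi * (a : ℝ) / ((2 * m : ℕ) : ℝ)) : ℝ) : ℂ) * I)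
      = ζ ^ a := by
    intro a
    rw [show ((((2 * Real.pi * (a : ℝ) / ((2 * m : ℕ) : ℝ)) : ℝ)) : ℂ) * I
        = (a : ℕ) * (2 * Real.pi * I / ((2 * m : ℕ) : ℂ)) by push_cast; ring,
      Complex.exp_nat_mul]
  have hsin : ∀ a : ℕ, ((Real.sin (2 * Real.pi * (a : ℝ) / ((2 * m : ℕ) : ℝ)) : ℝ) : ℂ)
      = (ζ ^ a - (ζ ^ a)⁻¹) * (-I / 2) := by
    intro a
    rw [Complex.ofReal_sin]
    simp only [Complex.sin]
    rw [neg_mul, Complex.exp_neg, hexp a]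
    ring
  have hcos : ∀ a : ℕ, ((Real.cos (2 * Real.pi * (a : ℝ) / ((2 * m : ℕ) : ℝ)) : ℝ) : ℂ)
      = (ζ ^ a + (ζ ^ a)⁻¹) / 2 := by
    intro a
    rw [Complex.ofReal_cos]
    simp only [Complex.cos]
    rw [neg_mul, Complex.exp_neg, hexp a]
  -- rewrite the angles
  have a1 : 2 * Real.pi * (k : ℝ) / (n₁ : ℝ)
      = 2 * Real.pi * ((2 * k * n₂ : ℕ) : ℝ) / ((2 * m : ℕ) : ℝ) := by
    rw [hm]; push_cast; field_simp
  have a2 : Real.pi * (k' : ℝ) / (n₁ : ℝ)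
      = 2 * Real.pi * ((k' * n₂ : ℕ) : ℝ) / ((2 * m : ℕ) : ℝ) := by
    rw [hm]; push_cast; field_simp
  have a3 : 2 * Real.pi * (l : ℝ) / (n₂ : ℝ)
      = 2 * Real.pi * ((2 * l * n₁ : ℕ) : ℝ) / ((2 * m : ℕ) : ℝ) := by
    rw [hm]; push_cast; field_simp
  have a4 : 2 * Real.pi * (l' : ℝ) / (n₂ : ℝ)
      = 2 * Real.pi * ((2 * l' * n₁ : ℕ) : ℝ) / ((2 * m : ℕ) : ℝ) := by
    rw [hm]; push_cast; field_simp
  have a5 : Real.pi * (k : ℝ) / (n₁ : ℝ)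
      = 2 * Real.pi * ((k * n₂ : ℕ) : ℝ) / ((2 * m : ℕ) : ℝ) := by
    rw [hm]; push_cast; field_simp
  have a6 : 2 * Real.pi * (k' : ℝ) / (n₁ : ℝ)
      = 2 * Real.pi * ((2 * k' * n₂ : ℕ) : ℝ) / ((2 * m : ℕ) : ℝ) := by
    rw [hm]; push_cast; field_simp
  rw [a1, a2, a3, a4, a5, a6] at h
  have hC := congrArg (fun t : ℝ => (t : ℂ)) h
  simp only [Complex.ofReal_mul, Complex.ofReal_add] at hC
  rw [hsin (2 * k * n₂), hsin (k' * n₂), hcos (2 * l * n₁), hsin (2 * l * n₁),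
    hsin (2 * l' * n₁), hsin (k * n₂), hcos (2 * k' * n₂), hsin (2 * k' * n₂)] at hC
  have hkey := key_alg _ _ _ _ _ _ _ _ _ hC
  -- memberships
  have hmemU : ∀ a : ℕ, (ζ ^ a - (ζ ^ a)⁻¹) ∈ K :=
    fun a => sub_mem (pow_mem hζK a) (inv_mem (pow_mem hζK a))
  have hmemV : ∀ a : ℕ, (ζ ^ a + (ζ ^ a)⁻¹) ∈ K :=
    fun a => add_mem (pow_mem hζK a) (inv_mem (pow_mem hζK a))
  have hσK : ((σ : ℝ) : ℂ) ∈ K := by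
    rcases hσ with h' | h'
    · rw [h']; simpa using one_mem K
    · rw [h']; simpa using neg_mem (one_mem K)
  have hsplit : ∀ a b : ℂ, a + b * I = 0 → a ∈ K → b ∈ K → a = 0 ∧ b = 0 := by
    intro a b hab ha hb
    by_cases hb0 : b = 0
    · exact ⟨by simpa [hb0] using hab, hb0⟩
    · exfalso
      apply hIK
      have hI : I = -a / b := by
        field_simp
        linear_combination hab
      rw [hI]
      exact div_mem (neg_mem ha) hb
  obtain ⟨eq1, eq2⟩ := hsplit _ _ hkey
    (add_mem (neg_mem (mul_mem (mul_mem (hmemU _) (hmemU _)) (hmemV _)))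
      (mul_mem hσK (mul_mem (mul_mem (hmemU _) (hmemU _)) (hmemV _))))
    (sub_mem (mul_mem (mul_mem (hmemU _) (hmemU _)) (hmemU _))
      (mul_mem hσK (mul_mem (mul_mem (hmemU _) (hmemU _)) (hmemU _))))
  -- combine the two relations
  have hzero : (ζ ^ (2 * k * n₂) - (ζ ^ (2 * k * n₂))⁻¹) * (ζ ^ (k' * n₂) - (ζ ^ (k' * n₂))⁻¹) *
      ((ζ ^ (2 * l * n₁) + (ζ ^ (2 * l * n₁))⁻¹) * (ζ ^ (2 * k' * n₂) - (ζ ^ (2 * k' * n₂))⁻¹)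
        - (ζ ^ (2 * l * n₁) - (ζ ^ (2 * l * n₁))⁻¹) * (ζ ^ (2 * k' * n₂) + (ζ ^ (2 * k' * n₂))⁻¹))
      = 0 := by
    linear_combination (-(ζ ^ (2 * k' * n₂) - (ζ ^ (2 * k' * n₂))⁻¹)) * eq1
      - (ζ ^ (2 * k' * n₂) + (ζ ^ (2 * k' * n₂))⁻¹) * eq2
  -- nonvanishing of the two sine factors
  have hune : ∀ a : ℕ, (¬ (2 * m : ℕ) ∣ 2 * a) → ζ ^ a - (ζ ^ a)⁻¹ ≠ 0 := by
    intro a hnd heq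
    apply hnd
    have h1 : ζ ^ a = (ζ ^ a)⁻¹ := sub_eq_zero.mp heq
    have h2 : ζ ^ (2 * a) = 1 := by
      rw [two_mul, pow_add]
      nth_rewrite 1 [h1]
      exact inv_mul_cancel₀ (pow_ne_zero a hζ0)
    exact (hζ.pow_eq_one_iff_dvd _).1 h2
  have hu1 : ζ ^ (2 * k * n₂) - (ζ ^ (2 * k * n₂))⁻¹ ≠ 0 := by
    apply hune
    intro hdvd
    have h1 : n₁ ∣ 2 * (2 * k * n₂) := dvd_trans ⟨2 * n₂, by rw [hm]; ring⟩ hdvd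
    have h1' : n₁ ∣ 4 * k * n₂ := by
      have e : 2 * (2 * k * n₂) = 4 * k * n₂ := by ring
      rwa [e] at h1
    exact aux_dvd hp₁ hodd₁ hp₂ hne hk1 hk2 h1'
  have hu2 : ζ ^ (k' * n₂) - (ζ ^ (k' * n₂))⁻¹ ≠ 0 := by
    apply hune
    intro hdvd
    have h1 : n₁ ∣ 2 * (k' * n₂) := dvd_trans ⟨2 * n₂, by rw [hm]; ring⟩ hdvd
    have h2 : n₁ ∣ 4 * k' * n₂ := dvd_trans h1 ⟨2, by ring⟩
    exact aux_dvd hp₁ hodd₁ hp₂ hne hk'1 hk'2 h2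
  have hz2 : (ζ ^ (2 * l * n₁) + (ζ ^ (2 * l * n₁))⁻¹) * (ζ ^ (2 * k' * n₂) - (ζ ^ (2 * k' * n₂))⁻¹)
      - (ζ ^ (2 * l * n₁) - (ζ ^ (2 * l * n₁))⁻¹) * (ζ ^ (2 * k' * n₂) + (ζ ^ (2 * k' * n₂))⁻¹)
      = 0 := by
    rcases mul_eq_zero.mp hzero with h' | h'
    · rcases mul_eq_zero.mp h' with h'' | h''
      · exact absurd h'' hu1
      · exact absurd h'' hu2
    · exact h'
  set x := ζ ^ (2 * l * n₁) with hxdef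
  set y := ζ ^ (2 * k' * n₂) with hydef
  have hx0 : x ≠ 0 := pow_ne_zero _ hζ0
  have hy0 : y ≠ 0 := pow_ne_zero _ hζ0
  have hsq : y ^ 2 = x ^ 2 := by
    have hxi : x * x⁻¹ = 1 := mul_inv_cancel₀ hx0
    have hyi : y * y⁻¹ = 1 := mul_inv_cancel₀ hy0
    linear_combination (x * y / 2) * hz2 - y ^ 2 * hxi + x ^ 2 * hyi
  have hpow : ζ ^ ((2 * k' * n₂) * 2) = ζ ^ ((2 * l * n₁) * 2) := by
    rw [pow_mul ζ (2 * k' * n₂) 2, pow_mul ζ (2 * l * n₁) 2]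
    exact hsq
  have hone : (ζ : ℂ) ^ ((((2 * k' * n₂) * 2 : ℕ) : ℤ) - (((2 * l * n₁) * 2 : ℕ) : ℤ)) = 1 := by
    rw [zpow_sub₀ hζ0, zpow_natCast, zpow_natCast, hpow]
    exact div_self (pow_ne_zero _ hζ0)
  have hdvd := (hζ.zpow_eq_one_iff_dvd _).1 hone
  have h5 : (n₁ : ℤ) ∣ (4 * k' * n₂ : ℤ) := by
    have h6 : (n₁ : ℤ) ∣ (((2 * k' * n₂) * 2 : ℕ) : ℤ) - (((2 * l * n₁) * 2 : ℕ) : ℤ) :=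
      dvd_trans ⟨2 * n₂, by rw [hm]; push_cast; ring⟩ hdvd
    have h7 : (n₁ : ℤ) ∣ (((2 * l * n₁) * 2 : ℕ) : ℤ) := ⟨4 * l, by push_cast; ring⟩
    have h8 := dvd_add h6 h7
    have h9 : (((2 * k' * n₂) * 2 : ℕ) : ℤ) - (((2 * l * n₁) * 2 : ℕ) : ℤ)
        + (((2 * l * n₁) * 2 : ℕ) : ℤ) = (4 * k' * n₂ : ℤ) := by push_cast; ring
    rwa [h9] at h8
  have h10 : n₁ ∣ 4 * k' * n₂ := by exact_mod_cast h5
  exact aux_dvd hp₁ hodd₁ hp₂ hne hk'1 hk'2 h10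
end

section
/- Let n₁ be a prime, and let t₁, …, t_N ∈ [0,1) be real numbers such that t₁, …, t_N, 1 are linearly independent over ℚ. For each i = 1, …, N let σ_i ∈ {1, −1} and let k_i be an integer with 0 < k_i < n₁, and set s_i = σ_i·t_i + k_i/n₁. Let α : {1, …, N} → {1, −1} be any sign function. Then there exists a positive integer n₄ such that for every i = 1, …, N the number α(i)·( cos(2π n₄ t_i) − cos(2π n₄ s_i) ) is strictly positive. -/
/-!
Take `n₄ = 1 + 2 n₁ m` and put `Aᵢ = 2π n₄ tᵢ`, `bᵢ = π kᵢ / n₁ ∈ (0, π)`. Then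
`2π n₄ sᵢ ≡ σᵢ Aᵢ + 2 bᵢ (mod 2π)` and
`αᵢ (cos Aᵢ - cos (σᵢ Aᵢ + 2 bᵢ)) = 2 sin bᵢ · cos (Aᵢ + σᵢ bᵢ - αᵢ σᵢ π/2)`,
whose last argument is `θᵢ + 2π m xᵢ` with `xᵢ = 2 n₁ tᵢ` and `θᵢ` independent of `m`. So it
suffices to put all these phases in the open half circle where the cosine is positive, a weak
form of Kronecker's theorem.

If no `m` does this, the nonnegative trigonometric polynomial
`P(m) = ∏ᵢ ((1 + cos (θᵢ + 2π m xᵢ)) / 2) ^ L` is at most `2⁻ᴸ` for every `m`. Its frequencies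
are `∑ᵢ (jᵢ - L) xᵢ`; the ℚ-independence of `x₁, …, x_N, 1` makes all of them except the zero one
non-resonant, so the Cesàro means of `P` tend to the constant term
`(C(2L, L) / 4ᴸ) ^ N ≥ (2L + 1)⁻ᴺ`, contradicting the bound once `(2L + 1) ^ N < 2 ^ L`.
-/

open Finset Filter Topology Real

lemma one_add_cos_div_two_pow_eq_sum (L : ℕ) (y : ℝ) :
    ((((1 + cos y) / 2) ^ L : ℝ) : ℂ) =
      ∑ r ∈ range (2 * L + 1),
        (((2 * L).choose r / 4 ^ L : ℝ) : ℂ) * Complex.exp (↑(((r : ℝ) - L) * y) * Complex.I) := by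
  set e := Complex.exp (↑(y / 2) * Complex.I)
  set e' := Complex.exp (↑(-(y / 2)) * Complex.I)
  have h2cos : ((2 * cos (y / 2) : ℝ) : ℂ) = e + e' := by
    simp only [e, e', Complex.exp_mul_I, ← Complex.ofReal_cos, ← Complex.ofReal_sin, cos_neg,
      sin_neg]
    push_cast; ring
  have hhalf : (1 + cos y) / 2 = (2 * cos (y / 2)) ^ 2 / 4 := by
    rw [mul_pow, cos_sq, mul_div_cancel₀ _ two_ne_zero]; ring
  calc ((((1 + cos y) / 2) ^ L : ℝ) : ℂ) = (e + e') ^ (2 * L) / 4 ^ L := by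
        rw [hhalf, div_pow, ← pow_mul, ← h2cos]; push_cast; ring
    _ = ∑ r ∈ range (2 * L + 1), e ^ r * e' ^ (2 * L - r) * (2 * L).choose r / 4 ^ L := by
        rw [add_pow, sum_div]
    _ = _ := by
        refine sum_congr rfl fun r hr => ?_
        have hr : r ≤ 2 * L := Nat.lt_succ_iff.mp (mem_range.mp hr)
        rw [← Complex.exp_nat_mul, ← Complex.exp_nat_mul, ← Complex.exp_add]
        push_cast [Nat.cast_sub hr]
        ring_nf

lemma prod_one_add_cos_div_two_pow_eq_sum {ι : Type*} [Fintype ι] [DecidableEq ι]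
    (L : ℕ) (y : ι → ℝ) :
    ((∏ i, ((1 + cos (y i)) / 2) ^ L : ℝ) : ℂ) =
      ∑ j ∈ Fintype.piFinset fun _ : ι => range (2 * L + 1),
        ((∏ i, ((2 * L).choose (j i) / 4 ^ L : ℝ) : ℝ) : ℂ) *
          Complex.exp (↑(∑ i, ((j i : ℝ) - L) * y i) * Complex.I) := by
  simp only [Complex.ofReal_prod, one_add_cos_div_two_pow_eq_sum, prod_univ_sum, prod_mul_distrib,
    ← Complex.exp_sum, ← sum_mul, Complex.ofReal_sum]

lemma prod_one_add_cos_div_two_pow_eq_sum_pow {ι : Type*} [Fintype ι] [DecidableEq ι]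
    (L : ℕ) (θ x : ι → ℝ) (m : ℕ) :
    ((∏ i, ((1 + cos (θ i + 2 * π * m * x i)) / 2) ^ L : ℝ) : ℂ) =
      ∑ j ∈ Fintype.piFinset fun _ : ι => range (2 * L + 1),
        ((∏ i, ((2 * L).choose (j i) / 4 ^ L : ℝ) : ℝ) : ℂ) *
          Complex.exp (↑(∑ i, ((j i : ℝ) - L) * θ i) * Complex.I) *
          Complex.exp (↑(2 * π * ∑ i, ((j i : ℝ) - L) * x i) * Complex.I) ^ m := by
  refine (prod_one_add_cos_div_two_pow_eq_sum L _).trans (sum_congr rfl fun j _ => ?_)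
  have hphase : ∑ i, ((j i : ℝ) - L) * (θ i + 2 * π * m * x i) =
      ∑ i, ((j i : ℝ) - L) * θ i + m * (2 * π * ∑ i, ((j i : ℝ) - L) * x i) := by
    rw [mul_sum, mul_sum, ← sum_add_distrib]
    exact sum_congr rfl fun i _ => by ring
  rw [hphase, Complex.ofReal_add, add_mul, Complex.exp_add, ← mul_assoc, ← Complex.exp_nat_mul]
  congr 2
  push_cast
  ring

lemma tendsto_inv_mul_geom_sum_of_ne_one {z : ℂ} (hz : ‖z‖ ≤ 1) (hz1 : z ≠ 1) :
    Tendsto (fun M : ℕ => (M : ℂ)⁻¹ * ∑ m ∈ range M, z ^ m) atTop (𝓝 0) := by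
  have hbound : ∀ M : ℕ, ‖∑ m ∈ range M, z ^ m‖ ≤ 2 / ‖z - 1‖ := fun M => by
    rw [geom_sum_eq hz1, norm_div]
    gcongr
    calc ‖z ^ M - 1‖ ≤ ‖z‖ ^ M + 1 := by simpa [norm_pow] using norm_sub_le (z ^ M) 1
      _ ≤ 2 := by linarith [pow_le_one₀ (norm_nonneg z) hz (n := M)]
  refine squeeze_zero_norm (fun M => ?_)
    (by simpa using (tendsto_inv_atTop_nhds_zero_nat (𝕜 := ℝ)).mul_const (2 / ‖z - 1‖))
  rw [norm_mul, norm_inv, Complex.norm_natCast]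
  exact mul_le_mul_of_nonneg_left (hbound M) (by positivity)

lemma tendsto_inv_mul_sum_sum_mul_pow {ι : Type*} [DecidableEq ι] {J : Finset ι} {j₀ : ι}
    (hj₀ : j₀ ∈ J) (a z : ι → ℂ) (hz : ∀ j ∈ J, ‖z j‖ ≤ 1) (hz₀ : z j₀ = 1)
    (hz_ne : ∀ j ∈ J, j ≠ j₀ → z j ≠ 1) :
    Tendsto (fun M : ℕ => (M : ℂ)⁻¹ * ∑ m ∈ range M, ∑ j ∈ J, a j * z j ^ m) atTop
      (𝓝 (a j₀)) := by
  have hsplit : ∀ M : ℕ, (M : ℂ)⁻¹ * ∑ m ∈ range M, ∑ j ∈ J, a j * z j ^ m =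
      a j₀ * ((M : ℂ)⁻¹ * ∑ m ∈ range M, z j₀ ^ m) +
        ∑ j ∈ J.erase j₀, a j * ((M : ℂ)⁻¹ * ∑ m ∈ range M, z j ^ m) := fun M => by
    rw [sum_comm, add_sum_erase J (fun j => a j * ((M : ℂ)⁻¹ * ∑ m ∈ range M, z j ^ m)) hj₀,
      mul_sum]
    simp only [mul_sum]
    exact sum_congr rfl fun j _ => sum_congr rfl fun m _ => by ring
  simp_rw [hsplit]
  have hrest := tendsto_finsetSum (J.erase j₀) fun j hj =>
    (tendsto_inv_mul_geom_sum_of_ne_one (hz j (mem_of_mem_erase hj))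
      (hz_ne j (mem_of_mem_erase hj) (ne_of_mem_erase hj))).const_mul (a j)
  have hconst : Tendsto (fun M : ℕ => (M : ℂ)⁻¹ * ∑ m ∈ range M, (1 : ℂ) ^ m) atTop (𝓝 1) :=
    tendsto_const_nhds.congr' ((eventually_ne_atTop 0).mono fun M hM => by simp [hM])
  rw [hz₀]
  simpa using (hconst.const_mul (a j₀)).add hrest

lemma exists_pow_lt_two_pow (n : ℕ) : ∃ L : ℕ, (2 * L + 1 : ℝ) ^ n < 2 ^ L := by
  have hlim : Tendsto (fun L : ℕ => (L : ℝ) ^ n / 2 ^ L) atTop (𝓝 0) :=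
    tendsto_pow_const_div_const_pow_of_one_lt n one_lt_two
  obtain ⟨L, hL1, hL⟩ := ((eventually_ge_atTop 1).and
    (hlim.eventually_lt_const (by positivity : (0 : ℝ) < (3 ^ n)⁻¹))).exists
  refine ⟨L, ?_⟩
  have hL1' : (1 : ℝ) ≤ L := by exact_mod_cast hL1
  rw [div_lt_iff₀ (by positivity), ← div_eq_inv_mul, lt_div_iff₀' (by positivity)] at hL
  calc (2 * L + 1 : ℝ) ^ n ≤ (3 * L) ^ n := by gcongr; linarith
    _ = 3 ^ n * L ^ n := mul_pow ..
    _ < 2 ^ L := hL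

lemma inv_two_mul_add_one_le_choose_div (L : ℕ) :
    (2 * L + 1 : ℝ)⁻¹ ≤ (2 * L).choose L / 4 ^ L := by
  have h := Nat.four_pow_le_two_mul_add_one_mul_central_binom L
  rw [inv_le_iff_one_le_mul₀' (by positivity), ← mul_div_assoc, one_le_div (by positivity)]
  exact_mod_cast h

lemma exists_half_pow_lt_choose_div_pow (n : ℕ) :
    ∃ L : ℕ, (1 / 2 : ℝ) ^ L < ((2 * L).choose L / 4 ^ L) ^ n := by
  obtain ⟨L, hL⟩ := exists_pow_lt_two_pow n
  refine ⟨L, ?_⟩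
  calc (1 / 2 : ℝ) ^ L < (2 * L + 1 : ℝ)⁻¹ ^ n := by
        rw [one_div_pow, one_div, inv_pow]; exact inv_strictAnti₀ (by positivity) hL
    _ ≤ _ := pow_le_pow_left₀ (by positivity) (inv_two_mul_add_one_le_choose_div L) n

lemma prod_one_add_cos_div_two_pow_le {ι : Type*} [Fintype ι] [DecidableEq ι] {y : ι → ℝ}
    (hy : ∃ i, cos (y i) ≤ 0) (L : ℕ) : ∏ i, ((1 + cos (y i)) / 2) ^ L ≤ (1 / 2) ^ L := by
  obtain ⟨i₀, hi₀⟩ := hy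
  have hg₀ : ∀ i, 0 ≤ (1 + cos (y i)) / 2 := fun i => by linarith [neg_one_le_cos (y i)]
  have hg₁ : ∀ i, (1 + cos (y i)) / 2 ≤ 1 := fun i => by linarith [cos_le_one (y i)]
  calc ∏ i, ((1 + cos (y i)) / 2) ^ L
        = ((1 + cos (y i₀)) / 2) ^ L * ∏ i ∈ univ.erase i₀, ((1 + cos (y i)) / 2) ^ L :=
        (mul_prod_erase _ _ (mem_univ i₀)).symm
    _ ≤ ((1 + cos (y i₀)) / 2) ^ L :=
        mul_le_of_le_one_right (pow_nonneg (hg₀ i₀) L)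
          (prod_le_one (fun i _ => pow_nonneg (hg₀ i) L) fun i _ => pow_le_one₀ (hg₀ i) (hg₁ i))
    _ ≤ (1 / 2) ^ L := pow_le_pow_left₀ (hg₀ i₀) (by linarith) L

lemma exp_two_pi_mul_sum_ne_one {ι : Type*} [Fintype ι] {x : ι → ℝ}
    (hx : ∀ (K : ι → ℤ) (p : ℤ), ∑ i, (K i : ℝ) * x i = p → K = 0) {L : ℕ} {j : ι → ℕ}
    (hj : j ≠ fun _ => L) :
    Complex.exp (↑(2 * π * ∑ i, ((j i : ℝ) - L) * x i) * Complex.I) ≠ 1 := by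
  intro h
  obtain ⟨p, hp⟩ := Complex.exp_eq_one_iff.mp h
  have hw : ∑ i, ((j i : ℝ) - L) * x i = p := by
    refine mul_left_cancel₀ two_pi_pos.ne' (Complex.ofReal_injective ?_)
    refine mul_right_cancel₀ Complex.I_ne_zero ?_
    rw [hp]; push_cast; ring
  refine hj (funext fun i => ?_)
  have := congrFun (hx (fun i => j i - L) p (by push_cast; exact hw)) i
  simp only [Pi.zero_apply, sub_eq_zero] at this
  exact_mod_cast this

theorem exists_nat_forall_cos_pos {ι : Type*} [Fintype ι] (x θ : ι → ℝ)
    (hx : ∀ (K : ι → ℤ) (p : ℤ), ∑ i, (K i : ℝ) * x i = p → K = 0) :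
    ∃ m : ℕ, ∀ i, 0 < cos (θ i + 2 * π * m * x i) := by
  classical
  by_contra! hbad
  obtain ⟨L, hL⟩ := exists_half_pow_lt_choose_div_pow (Fintype.card ι)
  set P : ℕ → ℝ := fun m => ∏ i, ((1 + cos (θ i + 2 * π * m * x i)) / 2) ^ L
  set J := Fintype.piFinset fun _ : ι => range (2 * L + 1)
  set j₀ : ι → ℕ := fun _ => L
  set c : (ι → ℕ) → ℝ := fun j => ∏ i, ((2 * L).choose (j i) / 4 ^ L : ℝ)
  set a : (ι → ℕ) → ℂ := fun j => c j * Complex.exp (↑(∑ i, ((j i : ℝ) - L) * θ i) * Complex.I)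
  set z : (ι → ℕ) → ℂ := fun j =>
    Complex.exp (↑(2 * π * ∑ i, ((j i : ℝ) - L) * x i) * Complex.I)
  have hPz : ∀ m : ℕ, (P m : ℂ) = ∑ j ∈ J, a j * z j ^ m :=
    prod_one_add_cos_div_two_pow_eq_sum_pow L θ x
  have hz₀ : z j₀ = 1 := by simp [z, j₀]
  have hz_ne : ∀ j ∈ J, j ≠ j₀ → z j ≠ 1 := fun j _ hj => exp_two_pi_mul_sum_ne_one hx hj
  have hlim := tendsto_inv_mul_sum_sum_mul_pow
    (Fintype.mem_piFinset.mpr fun _ => mem_range.mpr (by simp only [j₀]; omega)) a z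
    (fun j _ => (Complex.norm_exp_ofReal_mul_I _).le) hz₀ hz_ne
  have ha₀ : a j₀ = (((2 * L).choose L / 4 ^ L : ℝ) ^ Fintype.card ι : ℝ) := by
    simp [a, c, j₀, div_pow]
  have hmean : ∀ M : ℕ, (M : ℂ)⁻¹ * ∑ m ∈ range M, ∑ j ∈ J, a j * z j ^ m =
      (((M : ℝ)⁻¹ * ∑ m ∈ range M, P m : ℝ) : ℂ) := fun M => by
    simp [← hPz]
  have hmean_le : ∀ M : ℕ, (M : ℝ)⁻¹ * ∑ m ∈ range M, P m ≤ (1 / 2) ^ L := by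
    intro M
    rcases M.eq_zero_or_pos with rfl | hM
    · simp
    rw [inv_mul_le_iff₀ (by positivity)]
    calc ∑ m ∈ range M, P m ≤ ∑ m ∈ range M, (1 / 2 : ℝ) ^ L :=
          sum_le_sum fun m _ => prod_one_add_cos_div_two_pow_le (hbad m) L
      _ = M * (1 / 2) ^ L := by simp
  rw [ha₀] at hlim
  exact (hL.trans_le (le_of_tendsto' (tendsto_ofReal_iff.mp (hlim.congr hmean)) hmean_le)).false

lemma sign_mul_sin {ε : ℝ} (hε : ε = 1 ∨ ε = -1) (y : ℝ) : ε * sin y = cos (y - ε * (π / 2)) := by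
  rcases hε with rfl | rfl
  · rw [one_mul, one_mul, cos_sub_pi_div_two]
  · rw [neg_one_mul, neg_one_mul, sub_neg_eq_add, cos_add_pi_div_two]

lemma cos_sub_cos_sign_mul_add {σ : ℝ} (hσ : σ = 1 ∨ σ = -1) (A b : ℝ) :
    cos A - cos (σ * A + 2 * b) = 2 * σ * sin b * sin (A + σ * b) := by
  rw [cos_sub_cos]
  rcases hσ with rfl | rfl
  · rw [show (A - (1 * A + 2 * b)) / 2 = -b by ring, sin_neg]; ring_nf
  · rw [show (A + (-1 * A + 2 * b)) / 2 = b by ring]; ring_nf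

lemma sign_mul_cos_sub_cos {σ α : ℝ} (hσ : σ = 1 ∨ σ = -1) (hα : α = 1 ∨ α = -1) (A b : ℝ) :
    α * (cos A - cos (σ * A + 2 * b)) = 2 * sin b * cos (A + σ * b - α * σ * (π / 2)) := by
  have hασ : α * σ = 1 ∨ α * σ = -1 := by
    rcases hσ with rfl | rfl <;> rcases hα with rfl | rfl <;> norm_num
  rw [cos_sub_cos_sign_mul_add hσ, ← sign_mul_sin hασ]
  ring

lemma sin_pi_mul_div_pos {k n : ℕ} (hk : 0 < k) (hkn : k < n) : 0 < sin (π * k / n) := by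
  have hn : (0 : ℝ) < n := Nat.cast_pos.mpr (hk.trans hkn)
  refine sin_pos_of_pos_of_lt_pi (by positivity) ?_
  rw [mul_div_assoc]
  exact mul_lt_of_lt_one_right pi_pos ((div_lt_one hn).mpr (by exact_mod_cast hkn))

lemma cos_two_pi_mul_one_add_two_mul_mul {n m : ℕ} (hn : n ≠ 0) (k : ℕ) (σ t : ℝ) :
    cos (2 * π * ↑(1 + 2 * n * m) * (σ * t + k / n)) =
      cos (σ * (2 * π * ↑(1 + 2 * n * m) * t) + 2 * (π * k / n)) := by
  conv_rhs => rw [← cos_add_nat_mul_two_pi _ (2 * m * k)]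
  congr 1
  field_simp
  push_cast
  ring

lemma eq_zero_of_sum_int_mul_eq_int {ι : Type*} [Fintype ι] {t : ι → ℝ}
    (hind : ∀ (q : ι → ℚ) (q0 : ℚ), (∑ i, (q i : ℝ) * t i) + (q0 : ℝ) = 0 → ∀ i, q i = 0)
    {d : ι → ℚ} (hd : ∀ i, d i ≠ 0) (K : ι → ℤ) (p : ℤ)
    (h : ∑ i, (K i : ℝ) * (d i * t i) = p) : K = 0 := by
  have hq := hind (fun i => K i * d i) (-p) (by push_cast; rw [← h]; simp only [mul_assoc]; ring)
  funext i
  exact_mod_cast (mul_eq_zero.mp (hq i)).resolve_right (hd i)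

theorem lissajous_stmt16_general (n₁ : ℕ) (N : ℕ) (t : Fin N → ℝ)
    (hind : ∀ (q : Fin N → ℚ) (q0 : ℚ), (∑ i, (q i : ℝ) * t i) + (q0 : ℝ) = 0 →
      (∀ i, q i = 0) ∧ q0 = 0)
    (σ : Fin N → ℝ) (hσ : ∀ i, σ i = 1 ∨ σ i = -1)
    (k : Fin N → ℕ) (hk : ∀ i, 0 < k i ∧ k i < n₁)
    (s : Fin N → ℝ) (hs : ∀ i, s i = σ i * t i + (k i : ℝ) / n₁)
    (α : Fin N → ℝ) (hα : ∀ i, α i = 1 ∨ α i = -1) :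
    ∃ n₄ : ℕ, 0 < n₄ ∧ ∀ i, 0 < α i *
      (Real.cos (2 * Real.pi * n₄ * t i) - Real.cos (2 * Real.pi * n₄ * s i)) := by
  have hn₁ : ∀ i, n₁ ≠ 0 := fun i => ((hk i).1.trans (hk i).2).ne'
  obtain ⟨m, hm⟩ := exists_nat_forall_cos_pos (fun i => ((2 * n₁ : ℚ) : ℝ) * t i)
    (fun i => 2 * π * t i + σ i * (π * k i / n₁) - α i * σ i * (π / 2))
    (eq_zero_of_sum_int_mul_eq_int (fun q q0 h => (hind q q0 h).1)
      fun i => mul_ne_zero two_ne_zero (Nat.cast_ne_zero.mpr (hn₁ i)))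
  refine ⟨1 + 2 * n₁ * m, by positivity, fun i => ?_⟩
  rw [hs i, cos_two_pi_mul_one_add_two_mul_mul (hn₁ i), sign_mul_cos_sub_cos (hσ i) (hα i)]
  refine mul_pos (mul_pos two_pos (sin_pi_mul_div_pos (hk i).1 (hk i).2)) ?_
  refine (hm i).trans_eq (congrArg cos ?_)
  push_cast
  ring

/-- Let `n₁` be prime, `t₁, …, t_N ∈ [0,1)` with `t₁, …, t_N, 1` `ℚ`-linearly
independent, let `sᵢ = σᵢ·tᵢ + kᵢ/n₁` with `σᵢ = ±1` and `0 < kᵢ < n₁`, and let `α` be any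
sign function. Then there is a positive integer `n₄` such that
`α(i)·(cos(2πn₄tᵢ) − cos(2πn₄sᵢ)) > 0` for all `i`. -/
theorem lissajous_stmt16 (n₁ : ℕ) (hp : n₁.Prime) (N : ℕ) (t : Fin N → ℝ)
    (ht : ∀ i, t i ∈ Set.Ico (0:ℝ) 1)
    (hind : ∀ (q : Fin N → ℚ) (q0 : ℚ), (∑ i, (q i : ℝ) * t i) + (q0 : ℝ) = 0 →
      (∀ i, q i = 0) ∧ q0 = 0)
    (σ : Fin N → ℝ) (hσ : ∀ i, σ i = 1 ∨ σ i = -1)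
    (k : Fin N → ℕ) (hk : ∀ i, 0 < k i ∧ k i < n₁)
    (s : Fin N → ℝ) (hs : ∀ i, s i = σ i * t i + (k i : ℝ) / n₁)
    (α : Fin N → ℝ) (hα : ∀ i, α i = 1 ∨ α i = -1) :
    ∃ n₄ : ℕ, 0 < n₄ ∧ ∀ i, 0 < α i *
      (Real.cos (2 * Real.pi * n₄ * t i) - Real.cos (2 * Real.pi * n₄ * s i)) :=
  lissajous_stmt16_general n₁ N t hind σ hσ k hk s hs α hα
end
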